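/- arXiv:1611.01550 — 6 statements merged into one kernel-verified Lean document; each statement's English description precedes it below -/
import Mathlib

section
/- For every t ∈ ℝ and every τ > 0, the symmetric two-step identity holds: y(t+τ) + y(t−τ) = 2cos(ωτ)·y(t) − ∫₀^τ [sin(ω(τ−w))/(ε²ω)]·[g(t+w) + g(t−w)] dw. -/
open MeasureTheory intervalIntegral

/-- Symmetric two-step identity for the oscillatory ODE
`ε²y'' + (μ² + ε⁻²)y + g = 0`, with `ω = √(ε²μ²+1)/ε²`. -/
theorem symmetric_two_step_identity
    (ε μ : ℝ) (hε : 0 < ε)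
    (ω : ℝ) (hω : ω = Real.sqrt (ε ^ 2 * μ ^ 2 + 1) / ε ^ 2)
    (g y : ℝ → ℂ) (hg : Continuous g) (hy : ContDiff ℝ 2 y)
    (hode : ∀ t : ℝ,
      (ε : ℂ) ^ 2 * deriv (deriv y) t + ((μ : ℂ) ^ 2 + ((ε : ℂ) ^ 2)⁻¹) * y t + g t = 0) :
    ∀ t τ : ℝ, 0 < τ →
      y (t + τ) + y (t - τ) = 2 * (Real.cos (ω * τ) : ℂ) * y t
        - ∫ w in (0:ℝ)..τ, ((Real.sin (ω * (τ - w)) / (ε ^ 2 * ω) : ℝ) : ℂ)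
            * (g (t + w) + g (t - w)) := by
  intro t τ hτ
  have hε0 : (ε : ℝ) ≠ 0 := ne_of_gt hε
  have hω0 : ω ≠ 0 := by
    rw [hω]
    have h1 : (0:ℝ) < ε ^ 2 * μ ^ 2 + 1 := by positivity
    positivity
  have hεC : (ε : ℂ) ≠ 0 := by exact_mod_cast hε0
  have hωC : (ω : ℂ) ≠ 0 := by exact_mod_cast hω0
  -- key algebraic identity
  have hkR : ω ^ 2 * ε ^ 2 = μ ^ 2 + (ε ^ 2)⁻¹ := by
    rw [hω]
    rw [div_pow, Real.sq_sqrt (by positivity)]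
    field_simp
  have hk : ((ω:ℂ)) ^ 2 * (ε:ℂ) ^ 2 = (μ:ℂ) ^ 2 + ((ε:ℂ) ^ 2)⁻¹ := by
    exact_mod_cast congrArg Complex.ofReal hkR
  -- smoothness facts
  have h2 : ContDiff ℝ (1+1 : ℕ∞) y := by exact_mod_cast hy
  have hy1 : Differentiable ℝ y := hy.differentiable (by norm_num)
  have hdy : ContDiff ℝ 1 (deriv y) := (contDiff_succ_iff_deriv.mp h2).2.2
  have hdy1 : Differentiable ℝ (deriv y) := hdy.differentiable (by norm_num)
  have hddy : Continuous (deriv (deriv y)) := (contDiff_one_iff_deriv.mp hdy).2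
  -- ODE rewritten
  have hD : ∀ s, deriv (deriv y) s = -(ω:ℂ)^2 * y s - g s / (ε:ℂ)^2 := by
    intro s
    have h := hode s
    rw [← hk] at h
    field_simp
    linear_combination h
  set u : ℝ → ℂ := fun w => y (t + w) + y (t - w) with hu_def
  set v : ℝ → ℂ := fun w => deriv y (t + w) - deriv y (t - w) with hv_def
  set E : ℝ → ℂ := fun w =>
    (Real.sin (ω * (τ - w)) : ℂ) / (ω : ℂ) * v w + (Real.cos (ω * (τ - w)) : ℂ) * u w
    with hE_def
  have hinner : ∀ w : ℝ, HasDerivAt (fun w : ℝ => ω * (τ - w)) (-ω) w := by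
    intro w
    have := ((hasDerivAt_id w).const_sub τ).const_mul ω
    simpa using this
  have hsin : ∀ w : ℝ, HasDerivAt (fun w => ((Real.sin (ω * (τ - w)) : ℝ) : ℂ))
      (((Real.cos (ω * (τ - w)) * -ω : ℝ) : ℂ)) w := by
    intro w
    have h1 : HasDerivAt (fun w => Real.sin (ω * (τ - w)))
        (Real.cos (ω * (τ - w)) * -ω) w := by
      exact (Real.hasDerivAt_sin (ω * (τ - w))).comp w (hinner w)
    exact h1.ofReal_comp
  have hcos : ∀ w : ℝ, HasDerivAt (fun w => ((Real.cos (ω * (τ - w)) : ℝ) : ℂ))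
      (((-Real.sin (ω * (τ - w)) * -ω : ℝ) : ℂ)) w := by
    intro w
    have h1 : HasDerivAt (fun w => Real.cos (ω * (τ - w)))
        (-Real.sin (ω * (τ - w)) * -ω) w := by
      exact (Real.hasDerivAt_cos (ω * (τ - w))).comp w (hinner w)
    exact h1.ofReal_comp
  have hplus : ∀ (f : ℝ → ℂ) (hf : Differentiable ℝ f) (w : ℝ),
      HasDerivAt (fun w : ℝ => f (t + w)) (deriv f (t + w)) w := by
    intro f hf w
    exact ((hf (t + w)).hasDerivAt).comp_const_add t w
  have hminus : ∀ (f : ℝ → ℂ) (hf : Differentiable ℝ f) (w : ℝ),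
      HasDerivAt (fun w : ℝ => f (t - w)) (-deriv f (t - w)) w := by
    intro f hf w
    exact ((hf (t - w)).hasDerivAt).comp_const_sub t w
  have hu : ∀ w : ℝ, HasDerivAt u (v w) w := by
    intro w
    have := (hplus y hy1 w).add (hminus y hy1 w)
    exact this.congr_deriv (by simp only [hv_def]; ring)
  have hv : ∀ w : ℝ, HasDerivAt v
      (deriv (deriv y) (t + w) + deriv (deriv y) (t - w)) w := by
    intro w
    have := (hplus (deriv y) hdy1 w).sub (hminus (deriv y) hdy1 w)
    exact this.congr_deriv (by ring)
  have hE : ∀ w : ℝ, HasDerivAt E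
      (-(((Real.sin (ω * (τ - w)) / (ε ^ 2 * ω) : ℝ) : ℂ))
        * (g (t + w) + g (t - w))) w := by
    intro w
    have h1 := (((hsin w).div_const ((ω : ℂ))).mul (hv w)).add ((hcos w).mul (hu w))
    refine h1.congr_deriv (Eq.symm ?_)
    rw [hD (t + w), hD (t - w)]
    simp only [hu_def, hv_def]
    push_cast
    field_simp
    ring
  have hcont : Continuous fun w : ℝ =>
      -(((Real.sin (ω * (τ - w)) / (ε ^ 2 * ω) : ℝ) : ℂ)) * (g (t + w) + g (t - w)) := by
    have c1 : Continuous fun w : ℝ => ω * (τ - w) :=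
      continuous_const.mul (continuous_const.sub continuous_id)
    exact ((Complex.continuous_ofReal.comp
        ((Real.continuous_sin.comp c1).div_const _)).neg).mul
      ((hg.comp (continuous_const.add continuous_id)).add
        (hg.comp (continuous_const.sub continuous_id)))
  have key := intervalIntegral.integral_eq_sub_of_hasDerivAt
    (f := E) (a := (0:ℝ)) (b := τ) (fun w _ => hE w)
    (hcont.intervalIntegrable 0 τ)
  have hE0 : E 0 = 2 * (Real.cos (ω * τ) : ℂ) * y t := by
    simp only [hE_def, hu_def, hv_def]
    norm_num
    ring
  have hEτ : E τ = y (t + τ) + y (t - τ) := by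
    simp only [hE_def, hu_def]
    norm_num
  have key' : (∫ w in (0:ℝ)..τ, ((Real.sin (ω * (τ - w)) / (ε ^ 2 * ω) : ℝ) : ℂ)
      * (g (t + w) + g (t - w))) = -(E τ - E 0) := by
    rw [← key, ← intervalIntegral.integral_neg]
    apply intervalIntegral.integral_congr
    intro w _
    ring
  rw [hEτ, hE0] at key'
  linear_combination key'
end

section
/- For every t ∈ ℝ and every τ > 0, the antisymmetric two-step identity holds for the derivative: y'(t+τ) − y'(t−τ) = −2ω·sin(ωτ)·y(t) − ∫₀^τ [cos(ω(τ−w))/ε²]·[g(t+w) + g(t−w)] dw. -/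
open MeasureTheory intervalIntegral

/-- Antisymmetric two-step identity for the derivative `y'` of a
solution of the oscillatory ODE `ε²y'' + (μ² + ε⁻²)y + g = 0`,
with `ω = √(ε²μ²+1)/ε²`. -/
theorem antisymmetric_two_step_identity_deriv
    (ε μ : ℝ) (hε : 0 < ε)
    (ω : ℝ) (hω : ω = Real.sqrt (ε ^ 2 * μ ^ 2 + 1) / ε ^ 2)
    (g y : ℝ → ℂ) (hg : Continuous g) (hy : ContDiff ℝ 2 y)
    (hode : ∀ t : ℝ,
      (ε : ℂ) ^ 2 * deriv (deriv y) t + ((μ : ℂ) ^ 2 + ((ε : ℂ) ^ 2)⁻¹) * y t + g t = 0) :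
    ∀ t τ : ℝ, 0 < τ →
      deriv y (t + τ) - deriv y (t - τ) = -2 * ((ω * Real.sin (ω * τ) : ℝ) : ℂ) * y t
        - ∫ w in (0:ℝ)..τ, ((Real.cos (ω * (τ - w)) / ε ^ 2 : ℝ) : ℂ)
            * (g (t + w) + g (t - w)) := by
  intro t τ hτ
  have hε2 : (0:ℝ) < ε ^ 2 := by positivity
  have hεC : ((ε:ℂ)) ^ 2 ≠ 0 := by
    exact_mod_cast (pow_ne_zero 2 (by exact_mod_cast hε.ne' : (ε:ℂ) ≠ 0))
  have hω2 : ω ^ 2 * ε ^ 2 = μ ^ 2 + (ε ^ 2)⁻¹ := by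
    have h1 : (0:ℝ) ≤ ε ^ 2 * μ ^ 2 + 1 := by positivity
    rw [hω, div_pow, Real.sq_sqrt h1]
    field_simp
  have hμC : ((μ:ℂ) ^ 2 + ((ε:ℂ) ^ 2)⁻¹) = (ω:ℂ) ^ 2 * (ε:ℂ) ^ 2 := by
    rw [show ((ω:ℂ) ^ 2 * (ε:ℂ) ^ 2) = ((ω ^ 2 * ε ^ 2 : ℝ) : ℂ) by push_cast; ring, hω2]
    push_cast
    ring
  have hy1 : Differentiable ℝ y := hy.differentiable two_ne_zero
  have hy2 : ContDiff ℝ 1 (deriv y) :=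
    (contDiff_succ_iff_deriv.mp (show ContDiff ℝ (1 + 1) y by exact_mod_cast hy)).2.2
  have hy1' : Differentiable ℝ (deriv y) := hy2.differentiable one_ne_zero
  have hplus : ∀ (f : ℝ → ℂ), Differentiable ℝ f → ∀ w : ℝ,
      HasDerivAt (fun w => f (t + w)) (deriv f (t + w)) w := by
    intro f hf w
    exact HasDerivAt.comp_const_add t w (hf (t + w)).hasDerivAt
  have hminus : ∀ (f : ℝ → ℂ), Differentiable ℝ f → ∀ w : ℝ,
      HasDerivAt (fun w => f (t - w)) (-deriv f (t - w)) w := by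
    intro f hf w
    exact HasDerivAt.comp_const_sub t w (hf (t - w)).hasDerivAt
  set F : ℝ → ℂ := fun w => y (t + w) + y (t - w) with hFdef
  set h : ℝ → ℂ := fun w => (g (t + w) + g (t - w)) / (ε:ℂ) ^ 2 with hhdef
  have hFd : ∀ w : ℝ, HasDerivAt F (deriv y (t + w) - deriv y (t - w)) w := by
    intro w
    exact ((hplus y hy1 w).add (hminus y hy1 w)).congr_deriv (by ring)
  have hF'd : ∀ w : ℝ, HasDerivAt (fun w => deriv y (t + w) - deriv y (t - w))
      (deriv (deriv y) (t + w) + deriv (deriv y) (t - w)) w := by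
    intro w
    exact ((hplus (deriv y) hy1' w).sub (hminus (deriv y) hy1' w)).congr_deriv (by ring)
  have hode' : ∀ s : ℝ, deriv (deriv y) s = -(ω:ℂ) ^ 2 * y s - g s / (ε:ℂ) ^ 2 := by
    intro s
    have h0 := hode s
    rw [hμC] at h0
    apply mul_left_cancel₀ hεC
    field_simp
    linear_combination (norm := (field_simp [show (ε:ℂ) ≠ 0 by exact_mod_cast hε.ne']; ring)) h0
  have hcos : ∀ w : ℝ, HasDerivAt (fun w => Real.cos (ω * (τ - w)))
      (ω * Real.sin (ω * (τ - w))) w := by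
    intro w
    have h1 : HasDerivAt (fun w : ℝ => ω * (τ - w)) (-ω) w := by
      simpa using ((hasDerivAt_id w).const_sub τ).const_mul ω
    have := (Real.hasDerivAt_cos (ω * (τ - w))).comp w h1
    refine this.congr_deriv ?_
    ring
  have hsin : ∀ w : ℝ, HasDerivAt (fun w => ω * Real.sin (ω * (τ - w)))
      (-(ω ^ 2 * Real.cos (ω * (τ - w)))) w := by
    intro w
    have h1 : HasDerivAt (fun w : ℝ => ω * (τ - w)) (-ω) w := by
      simpa using ((hasDerivAt_id w).const_sub τ).const_mul ω
    have := ((Real.hasDerivAt_sin (ω * (τ - w))).comp w h1).const_mul ω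
    refine this.congr_deriv ?_
    ring
  set A : ℝ → ℂ := fun w => ((Real.cos (ω * (τ - w)) : ℝ) : ℂ) *
      (deriv y (t + w) - deriv y (t - w))
      - ((ω * Real.sin (ω * (τ - w)) : ℝ) : ℂ) * F w with hAdef
  have hAd : ∀ w : ℝ, HasDerivAt A (-((Real.cos (ω * (τ - w)) : ℝ) : ℂ) * h w) w := by
    intro w
    have h1 := ((hcos w).ofReal_comp.mul (hF'd w)).sub ((hsin w).ofReal_comp.mul (hFd w))
    refine h1.congr_deriv ?_
    rw [hode' (t + w), hode' (t - w)]
    simp only [hhdef, hFdef]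
    push_cast
    field_simp
    ring
  have hcont : Continuous (fun w => -((Real.cos (ω * (τ - w)) : ℝ) : ℂ) * h w) := by
    simp only [hhdef]
    fun_prop
  have key : (∫ w in (0:ℝ)..τ, -((Real.cos (ω * (τ - w)) : ℝ) : ℂ) * h w) = A τ - A 0 :=
    intervalIntegral.integral_eq_sub_of_hasDerivAt (fun w _ => hAd w)
      (hcont.intervalIntegrable 0 τ)
  have hAτ : A τ = deriv y (t + τ) - deriv y (t - τ) := by
    simp [hAdef]
  have hA0 : A 0 = -2 * ((ω * Real.sin (ω * τ) : ℝ) : ℂ) * y t := by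
    simp only [hAdef, hFdef]
    push_cast
    simp
    ring
  have hint : (∫ w in (0:ℝ)..τ, ((Real.cos (ω * (τ - w)) / ε ^ 2 : ℝ) : ℂ)
      * (g (t + w) + g (t - w))) = -(A τ - A 0) := by
    rw [← key, ← intervalIntegral.integral_neg]
    apply intervalIntegral.integral_congr
    intro w _
    simp only [hhdef]
    push_cast
    field_simp
  rw [hint, hAτ, hA0]
  ring
end

section
/- Define the local truncation error ξ := y(t+τ) + y(t−τ) − 2cos(ωτ)·y(t) + ∫₀^τ [sin(ω(τ−w))/(ε²ω)]·[2g(t) + w²g''(t)] dw. Then |ξ| ≤ [τ⁴/(6√(1+ε²μ²))]·∫₀^τ ∫₀¹ (|g⁽⁴⁾(t+ρw)| + |g⁽⁴⁾(t−ρw)|) dρ dw. -/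
open MeasureTheory intervalIntegral

lemma ofReal_hasDerivAt {f : ℝ → ℝ} {f' x : ℝ} (h : HasDerivAt f f' x) :
    HasDerivAt (fun x => ((f x : ℝ) : ℂ)) (f' : ℂ) x := h.ofReal_comp

lemma comp_plus {g : ℝ → ℂ} (hg : ContDiff ℝ 4 g) (t w : ℝ) (k : ℕ) (hk : k < 4) (ρ : ℝ) :
    HasDerivAt (fun ρ : ℝ => iteratedDeriv k g (t + ρ * w))
      ((w : ℂ) * iteratedDeriv (k + 1) g (t + ρ * w)) ρ := by
  have hd : HasDerivAt (iteratedDeriv k g) (iteratedDeriv (k+1) g (t + ρ * w)) (t + ρ * w) := by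
    have := (hg.differentiable_iteratedDeriv k (by exact_mod_cast hk)).differentiableAt
      (x := t + ρ * w) |>.hasDerivAt
    rwa [← iteratedDeriv_succ] at this
  have hin : HasDerivAt (fun ρ : ℝ => t + ρ * w) w ρ := by
    simpa using ((hasDerivAt_id ρ).mul_const w).const_add t
  have := HasDerivAt.scomp ρ hd hin
  simpa [Complex.real_smul, Function.comp_def] using this

lemma comp_minus {g : ℝ → ℂ} (hg : ContDiff ℝ 4 g) (t w : ℝ) (k : ℕ) (hk : k < 4) (ρ : ℝ) :
    HasDerivAt (fun ρ : ℝ => iteratedDeriv k g (t - ρ * w))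
      (-(w : ℂ) * iteratedDeriv (k + 1) g (t - ρ * w)) ρ := by
  have hd : HasDerivAt (iteratedDeriv k g) (iteratedDeriv (k+1) g (t - ρ * w)) (t - ρ * w) := by
    have := (hg.differentiable_iteratedDeriv k (by exact_mod_cast hk)).differentiableAt
      (x := t - ρ * w) |>.hasDerivAt
    rwa [← iteratedDeriv_succ] at this
  have hin : HasDerivAt (fun ρ : ℝ => t - ρ * w) (-w) ρ := by
    simpa using ((hasDerivAt_id ρ).mul_const w).const_sub t
  have := HasDerivAt.scomp ρ hd hin
  simpa [Complex.real_smul, Function.comp_def] using this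

lemma taylor4 {g : ℝ → ℂ} (hg : ContDiff ℝ 4 g) (t w : ℝ) :
    g (t + w) + g (t - w) - 2 * g t - (w : ℂ) ^ 2 * iteratedDeriv 2 g t
      = ∫ ρ in (0:ℝ)..1, ((w ^ 4 * (1 - ρ) ^ 3 / 6 : ℝ) : ℂ)
          * (iteratedDeriv 4 g (t + ρ * w) + iteratedDeriv 4 g (t - ρ * w)) := by
  set F : ℝ → ℂ := fun ρ =>
    (g (t + ρ * w) + g (t - ρ * w))
    + ((w * (1 - ρ) : ℝ) : ℂ) * (iteratedDeriv 1 g (t + ρ * w) - iteratedDeriv 1 g (t - ρ * w))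
    + ((w ^ 2 * (1 - ρ) ^ 2 / 2 : ℝ) : ℂ)
        * (iteratedDeriv 2 g (t + ρ * w) + iteratedDeriv 2 g (t - ρ * w))
    + ((w ^ 3 * (1 - ρ) ^ 3 / 6 : ℝ) : ℂ)
        * (iteratedDeriv 3 g (t + ρ * w) - iteratedDeriv 3 g (t - ρ * w)) with hF
  have hderiv : ∀ ρ : ℝ, HasDerivAt F
      (((w ^ 4 * (1 - ρ) ^ 3 / 6 : ℝ) : ℂ)
        * (iteratedDeriv 4 g (t + ρ * w) + iteratedDeriv 4 g (t - ρ * w))) ρ := by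
    intro ρ
    have c1 : HasDerivAt (fun ρ : ℝ => ((w * (1 - ρ) : ℝ) : ℂ)) ((-w : ℝ) : ℂ) ρ := by
      apply ofReal_hasDerivAt
      simpa using ((hasDerivAt_id ρ).const_sub 1).const_mul w
    have c2 : HasDerivAt (fun ρ : ℝ => ((w ^ 2 * (1 - ρ) ^ 2 / 2 : ℝ) : ℂ))
        ((w ^ 2 * (2 * (1 - ρ)) * (-1) / 2 : ℝ) : ℂ) ρ := by
      apply ofReal_hasDerivAt
      have h1 : HasDerivAt (fun ρ : ℝ => (1 - ρ) ^ 2) ((2 : ℕ) * (1 - ρ) ^ 1 * (-1)) ρ :=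
        ((hasDerivAt_id ρ).const_sub 1).pow 2
      simpa [mul_comm, mul_assoc, mul_left_comm] using (h1.const_mul (w ^ 2)).div_const 2
    have c3 : HasDerivAt (fun ρ : ℝ => ((w ^ 3 * (1 - ρ) ^ 3 / 6 : ℝ) : ℂ))
        ((w ^ 3 * (3 * (1 - ρ) ^ 2) * (-1) / 6 : ℝ) : ℂ) ρ := by
      apply ofReal_hasDerivAt
      have h1 : HasDerivAt (fun ρ : ℝ => (1 - ρ) ^ 3) ((3 : ℕ) * (1 - ρ) ^ 2 * (-1)) ρ :=
        ((hasDerivAt_id ρ).const_sub 1).pow 3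
      simpa [mul_comm, mul_assoc, mul_left_comm] using (h1.const_mul (w ^ 3)).div_const 6
    have g0p := comp_plus hg t w 0 (by norm_num) ρ
    have g0m := comp_minus hg t w 0 (by norm_num) ρ
    have g1p := comp_plus hg t w 1 (by norm_num) ρ
    have g1m := comp_minus hg t w 1 (by norm_num) ρ
    have g2p := comp_plus hg t w 2 (by norm_num) ρ
    have g2m := comp_minus hg t w 2 (by norm_num) ρ
    have g3p := comp_plus hg t w 3 (by norm_num) ρ
    have g3m := comp_minus hg t w 3 (by norm_num) ρ
    simp only [iteratedDeriv_zero] at g0p g0m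
    have main := (((g0p.add g0m).add (c1.mul (g1p.sub g1m))).add
      (c2.mul (g2p.add g2m))).add (c3.mul (g3p.sub g3m))
    rw [hF]
    convert main using 1
    · rfl
    · rfl
    simp only [Pi.add_apply, Pi.sub_apply]
    push_cast
    ring
  have hcont : Continuous fun ρ : ℝ => ((w ^ 4 * (1 - ρ) ^ 3 / 6 : ℝ) : ℂ)
      * (iteratedDeriv 4 g (t + ρ * w) + iteratedDeriv 4 g (t - ρ * w)) := by
    have h4 : Continuous (iteratedDeriv 4 g) := hg.continuous_iteratedDeriv 4 le_rfl
    fun_prop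
  have hftc := intervalIntegral.integral_eq_sub_of_hasDerivAt
    (f := F) (a := (0:ℝ)) (b := 1)
    (fun ρ _ => hderiv ρ) (hcont.intervalIntegrable 0 1)
  rw [hftc, hF]
  norm_num
  ring

lemma ode_identity (ε μ : ℝ) (hε : 0 < ε)
    (ω : ℝ) (hω : ω = Real.sqrt (ε ^ 2 * μ ^ 2 + 1) / ε ^ 2)
    (g : ℝ → ℂ) (hgc : Continuous g)
    (y : ℝ → ℂ) (hy : ContDiff ℝ 2 y)
    (hode : ∀ t : ℝ,
      (ε : ℂ) ^ 2 * deriv (deriv y) t + ((μ : ℂ) ^ 2 + ((ε : ℂ) ^ 2)⁻¹) * y t + g t = 0)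
    (t τ : ℝ) :
    y (t + τ) + y (t - τ) - 2 * (Real.cos (ω * τ) : ℂ) * y t
      = - ∫ w in (0:ℝ)..τ, ((Real.sin (ω * (τ - w)) / (ε ^ 2 * ω) : ℝ) : ℂ)
          * (g (t + w) + g (t - w)) := by
  have hε2 : (ε : ℝ) ^ 2 ≠ 0 := by positivity
  have hsqpos : 0 < Real.sqrt (ε ^ 2 * μ ^ 2 + 1) := Real.sqrt_pos.mpr (by positivity)
  have hωpos : 0 < ω := by rw [hω]; positivity
  have hωsq : ω ^ 2 * ε ^ 4 = ε ^ 2 * μ ^ 2 + 1 := by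
    have h1 : ((ε:ℝ) ^ 2) ^ 2 = ε ^ 4 := by ring
    rw [hω, div_pow, Real.sq_sqrt (by positivity), h1,
      div_mul_cancel₀ _ (by positivity : (ε:ℝ) ^ 4 ≠ 0)]
  have hεC : (ε : ℂ) ≠ 0 := Complex.ofReal_ne_zero.mpr hε.ne'
  have hωC : (ω : ℂ) ≠ 0 := Complex.ofReal_ne_zero.mpr hωpos.ne'
  have hωsqC : (ω : ℂ) ^ 2 * (ε : ℂ) ^ 4 = (ε : ℂ) ^ 2 * (μ : ℂ) ^ 2 + 1 := by
    exact_mod_cast congrArg Complex.ofReal hωsq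
  have hkey : (μ : ℂ) ^ 2 + ((ε : ℂ) ^ 2)⁻¹ = (ω : ℂ) ^ 2 * (ε : ℂ) ^ 2 := by
    field_simp
    linear_combination -hωsqC
  have hode' : ∀ s : ℝ, deriv (deriv y) s
      = -(ω : ℂ) ^ 2 * y s - g s * ((ε : ℂ) ^ 2)⁻¹ := by
    intro s
    have hode'2 : (ε : ℂ) ^ 2 * deriv (deriv y) s
        = -((ω : ℂ) ^ 2 * (ε : ℂ) ^ 2) * y s - g s := by
      linear_combination hode s - y s * hkey
    have e1 : deriv (deriv y) s = ((ε:ℂ)^2)⁻¹ * ((ε:ℂ)^2 * deriv (deriv y) s) :=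
      (inv_mul_cancel_left₀ (pow_ne_zero 2 hεC) _).symm
    rw [e1, hode'2]
    field_simp
  -- differentiability facts
  have hyd : Differentiable ℝ y := hy.differentiable (by norm_num)
  have hy1d : Differentiable ℝ (deriv y) := by
    have := hy.differentiable_iteratedDeriv 1 (by norm_num)
    rwa [iteratedDeriv_one] at this
  have hy2c : Continuous (deriv (deriv y)) := by
    have := hy.continuous_iteratedDeriv 2 le_rfl
    rwa [iteratedDeriv_succ, iteratedDeriv_one] at this
  have hinp : ∀ w : ℝ, HasDerivAt (fun w : ℝ => t + w) 1 w := fun w => by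
    simpa using (hasDerivAt_id w).const_add t
  have hinm : ∀ w : ℝ, HasDerivAt (fun w : ℝ => t - w) (-1) w := fun w => by
    simpa using (hasDerivAt_id w).const_sub t
  have hyp : ∀ w : ℝ, HasDerivAt (fun w : ℝ => y (t + w)) (deriv y (t + w)) w := fun w => by
    simpa [Function.comp_def] using ((hyd (t + w)).hasDerivAt).scomp w (hinp w)
  have hym : ∀ w : ℝ, HasDerivAt (fun w : ℝ => y (t - w)) (-deriv y (t - w)) w := fun w => by
    simpa [Function.comp_def] using ((hyd (t - w)).hasDerivAt).scomp w (hinm w)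
  have hy1p : ∀ w : ℝ, HasDerivAt (fun w : ℝ => deriv y (t + w)) (deriv (deriv y) (t + w)) w :=
    fun w => by simpa [Function.comp_def] using ((hy1d (t + w)).hasDerivAt).scomp w (hinp w)
  have hy1m : ∀ w : ℝ, HasDerivAt (fun w : ℝ => deriv y (t - w)) (-deriv (deriv y) (t - w)) w :=
    fun w => by simpa [Function.comp_def] using ((hy1d (t - w)).hasDerivAt).scomp w (hinm w)
  set G : ℝ → ℂ := fun w =>
    ((Real.sin (ω * (τ - w)) : ℝ) : ℂ) * (deriv y (t + w) - deriv y (t - w))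
    + ((ω * Real.cos (ω * (τ - w)) : ℝ) : ℂ) * (y (t + w) + y (t - w)) with hG
  have hGderiv : ∀ w : ℝ, HasDerivAt G
      (((Real.sin (ω * (τ - w)) : ℝ) : ℂ)
        * (-(g (t + w) + g (t - w)) * ((ε : ℂ) ^ 2)⁻¹)) w := by
    intro w
    have hu : HasDerivAt (fun w : ℝ => ω * (τ - w)) (ω * (-1)) w :=
      ((hasDerivAt_id w).const_sub τ).const_mul ω
    have hsin : HasDerivAt (fun w : ℝ => ((Real.sin (ω * (τ - w)) : ℝ) : ℂ))
        ((Real.cos (ω * (τ - w)) * (ω * (-1)) : ℝ) : ℂ) w :=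
      ofReal_hasDerivAt ((Real.hasDerivAt_sin _).comp w hu)
    have hcos : HasDerivAt (fun w : ℝ => ((ω * Real.cos (ω * (τ - w)) : ℝ) : ℂ))
        ((ω * (-Real.sin (ω * (τ - w)) * (ω * (-1))) : ℝ) : ℂ) w :=
      ofReal_hasDerivAt (((Real.hasDerivAt_cos _).comp w hu).const_mul ω)
    have main := (hsin.mul ((hy1p w).sub (hy1m w))).add (hcos.mul ((hyp w).add (hym w)))
    rw [hG]
    convert main using 1
    · rfl
    · rfl
    simp only [Pi.add_apply, Pi.sub_apply]
    rw [hode' (t + w), hode' (t - w)]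
    push_cast
    ring
  have hcont : Continuous fun w : ℝ =>
      ((Real.sin (ω * (τ - w)) : ℝ) : ℂ)
        * (-(g (t + w) + g (t - w)) * ((ε : ℂ) ^ 2)⁻¹) := by
    fun_prop
  have hftc := intervalIntegral.integral_eq_sub_of_hasDerivAt
    (f := G) (a := (0:ℝ)) (b := τ) (fun w _ => hGderiv w) (hcont.intervalIntegrable 0 τ)
  have hGτ : G τ = ((ω : ℝ) : ℂ) * (y (t + τ) + y (t - τ)) := by
    rw [hG]; norm_num
  have hG0 : G 0 = ((ω : ℝ) : ℂ) * ((Real.cos (ω * τ) : ℝ) : ℂ) * (2 * y t) := by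
    rw [hG]
    simp only [mul_zero, sub_zero, add_zero, sub_self, zero_mul, zero_add, Complex.ofReal_mul]
    ring
  have hIeq : (∫ w in (0:ℝ)..τ, ((Real.sin (ω * (τ - w)) / (ε ^ 2 * ω) : ℝ) : ℂ)
          * (g (t + w) + g (t - w)))
      = -(ω : ℂ)⁻¹ * (G τ - G 0) := by
    rw [← hftc, ← intervalIntegral.integral_const_mul]
    apply intervalIntegral.integral_congr
    intro w _
    push_cast
    field_simp
  rw [hIeq, hGτ, hG0]
  field_simp

/-- Bound on the local truncation error `ξ` of the symmetric
Gautschi-type quadrature, for the oscillatory ODE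
`ε²y'' + (μ² + ε⁻²)y + g = 0` with `ω = √(ε²μ²+1)/ε²`
(so that `1/(ε²ω) = 1/√(1+ε²μ²)`). -/
theorem truncation_error_bound
    (ε μ : ℝ) (hε : 0 < ε)
    (ω : ℝ) (hω : ω = Real.sqrt (ε ^ 2 * μ ^ 2 + 1) / ε ^ 2)
    (g : ℝ → ℂ) (hg : ContDiff ℝ 4 g)
    (y : ℝ → ℂ) (hy : ContDiff ℝ 2 y)
    (hode : ∀ t : ℝ,
      (ε : ℂ) ^ 2 * deriv (deriv y) t + ((μ : ℂ) ^ 2 + ((ε : ℂ) ^ 2)⁻¹) * y t + g t = 0)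
    (t τ : ℝ) (hτ : 0 < τ)
    (ξ : ℂ)
    (hξ : ξ = y (t + τ) + y (t - τ) - 2 * (Real.cos (ω * τ) : ℂ) * y t
      + ∫ w in (0:ℝ)..τ, ((Real.sin (ω * (τ - w)) / (ε ^ 2 * ω) : ℝ) : ℂ)
          * (2 * g t + (w : ℂ) ^ 2 * iteratedDeriv 2 g t)) :
    ‖ξ‖ ≤ (τ ^ 4 / (6 * Real.sqrt (1 + ε ^ 2 * μ ^ 2)))
      * ∫ w in (0:ℝ)..τ, ∫ ρ in (0:ℝ)..1,
          (‖iteratedDeriv 4 g (t + ρ * w)‖ + ‖iteratedDeriv 4 g (t - ρ * w)‖) := by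
  have hτ0 : (0:ℝ) ≤ τ := hτ.le
  have hgc : Continuous g := hg.continuous
  have hG2c : Continuous (iteratedDeriv 2 g) := hg.continuous_iteratedDeriv 2 (by norm_num)
  have hG4c : Continuous (iteratedDeriv 4 g) := hg.continuous_iteratedDeriv 4 le_rfl
  have hsqpos : 0 < Real.sqrt (1 + ε ^ 2 * μ ^ 2) := Real.sqrt_pos.mpr (by positivity)
  have hωpos : 0 < ω := by rw [hω]; positivity
  have hεω : ε ^ 2 * ω = Real.sqrt (1 + ε ^ 2 * μ ^ 2) := by
    rw [hω, add_comm (1:ℝ)]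
    field_simp
  set K : ℝ := (Real.sqrt (1 + ε ^ 2 * μ ^ 2))⁻¹ with hK
  have hK0 : 0 ≤ K := by positivity
  have hcbound : ∀ w : ℝ, |Real.sin (ω * (τ - w)) / (ε ^ 2 * ω)| ≤ K := by
    intro w
    rw [abs_div, abs_of_pos (by positivity : (0:ℝ) < ε ^ 2 * ω), hεω, hK]
    rw [div_eq_mul_inv]
    nlinarith [Real.abs_sin_le_one (ω * (τ - w)), inv_nonneg.mpr hsqpos.le,
      abs_nonneg (Real.sin (ω * (τ - w)))]
  have hsum := ode_identity ε μ hε ω hω g hgc y hy hode t τ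
  have hi1 : IntervalIntegrable
      (fun w => ((Real.sin (ω * (τ - w)) / (ε ^ 2 * ω) : ℝ) : ℂ) * (g (t + w) + g (t - w)))
      volume 0 τ := (by fun_prop : Continuous _).intervalIntegrable 0 τ
  have hi2 : IntervalIntegrable
      (fun w => ((Real.sin (ω * (τ - w)) / (ε ^ 2 * ω) : ℝ) : ℂ)
        * (2 * g t + (w : ℂ) ^ 2 * iteratedDeriv 2 g t)) volume 0 τ :=
    (by fun_prop : Continuous _).intervalIntegrable 0 τ
  have hξ3 : ξ = ∫ w in (0:ℝ)..τ,
      -(((Real.sin (ω * (τ - w)) / (ε ^ 2 * ω) : ℝ) : ℂ)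
        * ∫ ρ in (0:ℝ)..1, ((w ^ 4 * (1 - ρ) ^ 3 / 6 : ℝ) : ℂ)
            * (iteratedDeriv 4 g (t + ρ * w) + iteratedDeriv 4 g (t - ρ * w))) := by
    rw [hξ, hsum, neg_add_eq_sub, ← intervalIntegral.integral_sub hi2 hi1]
    apply intervalIntegral.integral_congr
    intro w _
    have ht := taylor4 hg t w
    simp only []
    linear_combination (-(((Real.sin (ω * (τ - w)) / (ε ^ 2 * ω) : ℝ) : ℂ))) * ht
  have hinner_cont : Continuous (fun w : ℝ => ∫ ρ in (0:ℝ)..1,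
      ((w ^ 4 * (1 - ρ) ^ 3 / 6 : ℝ) : ℂ)
        * (iteratedDeriv 4 g (t + ρ * w) + iteratedDeriv 4 g (t - ρ * w))) := by
    apply intervalIntegral.continuous_parametric_intervalIntegral_of_continuous' (μ := volume)
    fun_prop
  have hH_cont : Continuous (fun w : ℝ => ∫ ρ in (0:ℝ)..1,
      (‖iteratedDeriv 4 g (t + ρ * w)‖ + ‖iteratedDeriv 4 g (t - ρ * w)‖)) := by
    apply intervalIntegral.continuous_parametric_intervalIntegral_of_continuous' (μ := volume)
    fun_prop
  have hEw : ∀ w ∈ Set.Icc (0:ℝ) τ,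
      ‖∫ ρ in (0:ℝ)..1, ((w ^ 4 * (1 - ρ) ^ 3 / 6 : ℝ) : ℂ)
          * (iteratedDeriv 4 g (t + ρ * w) + iteratedDeriv 4 g (t - ρ * w))‖
        ≤ (τ ^ 4 / 6) * ∫ ρ in (0:ℝ)..1,
            (‖iteratedDeriv 4 g (t + ρ * w)‖ + ‖iteratedDeriv 4 g (t - ρ * w)‖) := by
    intro w hw
    refine le_trans (intervalIntegral.norm_integral_le_integral_norm (by norm_num)) ?_
    rw [← intervalIntegral.integral_const_mul]
    apply intervalIntegral.integral_mono_on (by norm_num)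
    · exact ((by fun_prop : Continuous _).norm).intervalIntegrable 0 1
    · exact (by fun_prop : Continuous _).intervalIntegrable 0 1
    · intro ρ hρ
      rw [norm_mul, Complex.norm_real, Real.norm_eq_abs]
      apply mul_le_mul ?_ (norm_add_le _ _) (norm_nonneg _) (by positivity)
      have h1ρ : (0:ℝ) ≤ 1 - ρ := by linarith [hρ.2]
      rw [abs_of_nonneg (div_nonneg
        (mul_nonneg (pow_nonneg hw.1 4) (pow_nonneg h1ρ 3)) (by norm_num))]
      have h1 : w ^ 4 ≤ τ ^ 4 := pow_le_pow_left₀ hw.1 hw.2 4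
      have h2 : (1 - ρ) ^ 3 ≤ 1 := pow_le_one₀ h1ρ (by linarith [hρ.1])
      have h3 : w ^ 4 * (1 - ρ) ^ 3 ≤ τ ^ 4 * 1 :=
        mul_le_mul h1 h2 (pow_nonneg h1ρ 3) (pow_nonneg (le_trans hw.1 hw.2) 4)
      linarith
  calc ‖ξ‖ = ‖∫ w in (0:ℝ)..τ,
      -(((Real.sin (ω * (τ - w)) / (ε ^ 2 * ω) : ℝ) : ℂ)
        * ∫ ρ in (0:ℝ)..1, ((w ^ 4 * (1 - ρ) ^ 3 / 6 : ℝ) : ℂ)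
            * (iteratedDeriv 4 g (t + ρ * w) + iteratedDeriv 4 g (t - ρ * w)))‖ := by
        rw [hξ3]
    _ ≤ ∫ w in (0:ℝ)..τ, ‖-(((Real.sin (ω * (τ - w)) / (ε ^ 2 * ω) : ℝ) : ℂ)
        * ∫ ρ in (0:ℝ)..1, ((w ^ 4 * (1 - ρ) ^ 3 / 6 : ℝ) : ℂ)
            * (iteratedDeriv 4 g (t + ρ * w) + iteratedDeriv 4 g (t - ρ * w)))‖ :=
      intervalIntegral.norm_integral_le_integral_norm hτ0
    _ ≤ ∫ w in (0:ℝ)..τ, (K * (τ ^ 4 / 6)) * ∫ ρ in (0:ℝ)..1,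
          (‖iteratedDeriv 4 g (t + ρ * w)‖ + ‖iteratedDeriv 4 g (t - ρ * w)‖) := by
      apply intervalIntegral.integral_mono_on hτ0
      · exact ((Continuous.mul (by fun_prop) hinner_cont).neg.norm).intervalIntegrable 0 τ
      · exact (continuous_const.mul hH_cont).intervalIntegrable 0 τ
      · intro w hw
        rw [norm_neg, norm_mul, Complex.norm_real, Real.norm_eq_abs, mul_assoc]
        exact mul_le_mul (hcbound w) (hEw w hw) (norm_nonneg _) hK0
    _ = (τ ^ 4 / (6 * Real.sqrt (1 + ε ^ 2 * μ ^ 2)))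
        * ∫ w in (0:ℝ)..τ, ∫ ρ in (0:ℝ)..1,
            (‖iteratedDeriv 4 g (t + ρ * w)‖ + ‖iteratedDeriv 4 g (t - ρ * w)‖) := by
      rw [intervalIntegral.integral_const_mul]
      congr 1
      rw [hK]
      field_simp
end

section
/- Suppose in addition that 0 < ωτ ≤ π/2. Then sin(ωτ) > 0 and the truncation error ξ := y(t+τ) + y(t−τ) − 2cos(ωτ)·y(t) + ∫₀^τ [sin(ω(τ−w))/(ε²ω)]·[2g(t) + w²g''(t)] dw satisfies |ξ/sin(ωτ)| ≤ [τ⁴/(6√(1+ε²μ²))]·∫₀^τ ∫₀¹ (|g⁽⁴⁾(t+ρw)| + |g⁽⁴⁾(t−ρw)|) dρ dw; in particular the factor sin(ω(τ−w)) in the remainder is dominated by sin(ωτ) for all 0 ≤ w ≤ τ. -/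
open MeasureTheory intervalIntegral

section helpers
variable (g : ℝ → ℂ) (hg : ContDiff ℝ 4 g)
include hg

private lemma gk_contDiff (k : ℕ) (hk : k ≤ 4) :
    ContDiff ℝ ((4 - k : ℕ)) (iteratedDeriv k g) := by
  rw [iteratedDeriv_eq_iterate]
  apply ContDiff.iterate_deriv' (4 - k) k
  rw [show (4 - k) + k = 4 from by omega]
  exact_mod_cast hg

private lemma gk_hasDerivAt (k : ℕ) (hk : k ≤ 3) (x : ℝ) :
    HasDerivAt (iteratedDeriv k g) (iteratedDeriv (k + 1) g x) x := by
  have h1 := gk_contDiff g hg k (by omega)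
  have h2 : DifferentiableAt ℝ (iteratedDeriv k g) x := by
    have : (1 : WithTop ℕ∞) ≤ ((4 - k : ℕ) : WithTop ℕ∞) := by
      have hk1 : 1 ≤ 4 - k := by omega
      exact_mod_cast hk1
    exact (h1.differentiable (pos_iff_ne_zero.mp (lt_of_lt_of_le zero_lt_one this))) x
  rw [iteratedDeriv_succ]
  exact h2.hasDerivAt

private lemma gk_cont (k : ℕ) (hk : k ≤ 4) :
    Continuous (iteratedDeriv k g) := (gk_contDiff g hg k hk).continuous

private lemma taylor_step (t w : ℝ) :
    ∫ ρ in (0:ℝ)..1, (((1-ρ)^3 * w^4 / 6 : ℝ) : ℂ)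
        * (iteratedDeriv 4 g (t+ρ*w) + iteratedDeriv 4 g (t-ρ*w))
      = (g (t+w) + g (t-w)) - (2 * g t + (w:ℂ)^2 * iteratedDeriv 2 g t) := by
  set H : ℝ → ℂ := fun ρ =>
    ((g (t+ρ*w) + g (t-ρ*w))
    + (((1-ρ)*w : ℝ) : ℂ) * (iteratedDeriv 1 g (t+ρ*w) - iteratedDeriv 1 g (t-ρ*w)))
    + ((((1-ρ)*w : ℝ) : ℂ) * (((1-ρ)*w : ℝ) : ℂ))/2 * (iteratedDeriv 2 g (t+ρ*w) + iteratedDeriv 2 g (t-ρ*w))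
    + (((((1-ρ)*w : ℝ) : ℂ) * (((1-ρ)*w : ℝ) : ℂ)) * (((1-ρ)*w : ℝ) : ℂ))/6 * (iteratedDeriv 3 g (t+ρ*w) - iteratedDeriv 3 g (t-ρ*w))
    with hH
  have key : ∀ ρ : ℝ, HasDerivAt H
      ((((1-ρ)^3 * w^4 / 6 : ℝ):ℂ) * (iteratedDeriv 4 g (t+ρ*w) + iteratedDeriv 4 g (t-ρ*w))) ρ := by
    intro ρ
    have line1 : HasDerivAt (fun ρ : ℝ => t + ρ*w) w ρ := by
      simpa using ((hasDerivAt_id ρ).mul_const w).const_add t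
    have line2 : HasDerivAt (fun ρ : ℝ => t - ρ*w) (-w) ρ := by
      simpa using ((hasDerivAt_id ρ).mul_const w).const_sub t
    have hP : ∀ k, k ≤ 3 → HasDerivAt (fun ρ : ℝ => iteratedDeriv k g (t+ρ*w))
        ((w:ℂ) * iteratedDeriv (k+1) g (t+ρ*w)) ρ := fun k hk => by
      simpa [Complex.real_smul, Function.comp_def] using (gk_hasDerivAt g hg k hk _).scomp ρ line1
    have hM : ∀ k, k ≤ 3 → HasDerivAt (fun ρ : ℝ => iteratedDeriv k g (t-ρ*w))
        (-((w:ℂ) * iteratedDeriv (k+1) g (t-ρ*w))) ρ := fun k hk => by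
      simpa [Complex.real_smul, Function.comp_def] using (gk_hasDerivAt g hg k hk _).scomp ρ line2
    have hP0 : HasDerivAt (fun ρ : ℝ => g (t+ρ*w)) ((w:ℂ) * iteratedDeriv 1 g (t+ρ*w)) ρ := by
      simpa [iteratedDeriv_zero] using hP 0 (by norm_num)
    have hM0 : HasDerivAt (fun ρ : ℝ => g (t-ρ*w)) (-((w:ℂ) * iteratedDeriv 1 g (t-ρ*w))) ρ := by
      simpa [iteratedDeriv_zero] using hM 0 (by norm_num)
    have ha : HasDerivAt (fun ρ : ℝ => (((1-ρ)*w : ℝ):ℂ)) ((-w : ℝ):ℂ) ρ :=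
      HasDerivAt.ofReal_comp (by simpa using ((hasDerivAt_id ρ).const_sub 1).mul_const w)
    have term1 := hP0.add hM0
    have term2 := ha.mul ((hP 1 (by norm_num)).sub (hM 1 (by norm_num)))
    have term3 := ((ha.mul ha).div_const 2).mul ((hP 2 (by norm_num)).add (hM 2 (by norm_num)))
    have term4 := (((ha.mul ha).mul ha).div_const 6).mul ((hP 3 (by norm_num)).sub (hM 3 (by norm_num)))
    have total := ((term1.add term2).add term3).add term4
    refine total.congr_deriv ?_
    simp only [Pi.add_apply, Pi.sub_apply, Pi.mul_apply, Pi.pow_apply, Pi.div_apply]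
    push_cast
    ring
  have c4 : Continuous (iteratedDeriv 4 g) := gk_cont g hg 4 (by norm_num)
  have hint : IntervalIntegrable (fun ρ : ℝ => (((1-ρ)^3 * w^4 / 6 : ℝ):ℂ)
      * (iteratedDeriv 4 g (t+ρ*w) + iteratedDeriv 4 g (t-ρ*w))) volume 0 1 := by
    apply Continuous.intervalIntegrable
    fun_prop
  rw [integral_eq_sub_of_hasDerivAt (fun ρ _ => key ρ) hint]
  simp only [hH]
  norm_num
  ring

end helpers

/-- Under the extra assumption `0 < ωτ ≤ π/2`, one has
`sin(ωτ) > 0`, the normalized truncation error `ξ/sin(ωτ)` obeys the same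
fourth-order bound, and the kernel factor `sin(ω(τ−w))` is dominated by
`sin(ωτ)` for `0 ≤ w ≤ τ`. -/
theorem truncation_error_bound_normalized
    (ε μ : ℝ) (hε : 0 < ε)
    (ω : ℝ) (hω : ω = Real.sqrt (ε ^ 2 * μ ^ 2 + 1) / ε ^ 2)
    (g : ℝ → ℂ) (hg : ContDiff ℝ 4 g)
    (y : ℝ → ℂ) (hy : ContDiff ℝ 2 y)
    (hode : ∀ t : ℝ,
      (ε : ℂ) ^ 2 * deriv (deriv y) t + ((μ : ℂ) ^ 2 + ((ε : ℂ) ^ 2)⁻¹) * y t + g t = 0)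
    (t τ : ℝ) (hτ : 0 < τ)
    (hωτ : 0 < ω * τ ∧ ω * τ ≤ Real.pi / 2)
    (ξ : ℂ)
    (hξ : ξ = y (t + τ) + y (t - τ) - 2 * (Real.cos (ω * τ) : ℂ) * y t
      + ∫ w in (0:ℝ)..τ, ((Real.sin (ω * (τ - w)) / (ε ^ 2 * ω) : ℝ) : ℂ)
          * (2 * g t + (w : ℂ) ^ 2 * iteratedDeriv 2 g t)) :
    0 < Real.sin (ω * τ)
    ∧ ‖ξ / ((Real.sin (ω * τ) : ℝ) : ℂ)‖
        ≤ (τ ^ 4 / (6 * Real.sqrt (1 + ε ^ 2 * μ ^ 2)))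
          * ∫ w in (0:ℝ)..τ, ∫ ρ in (0:ℝ)..1,
              (‖iteratedDeriv 4 g (t + ρ * w)‖ + ‖iteratedDeriv 4 g (t - ρ * w)‖)
    ∧ (∀ w : ℝ, 0 ≤ w → w ≤ τ → |Real.sin (ω * (τ - w))| ≤ Real.sin (ω * τ)) := by
  have hπ := Real.pi_pos
  have hε2 : (0:ℝ) < ε^2 := by positivity
  have hX : (0:ℝ) < ε^2*μ^2+1 := by positivity
  have hsqpos : 0 < Real.sqrt (ε^2*μ^2+1) := Real.sqrt_pos.mpr hX
  have hωpos : 0 < ω := by rw [hω]; positivity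
  have hε2ω : ε^2 * ω = Real.sqrt (ε^2*μ^2+1) := by
    rw [hω]; field_simp
  -- Part 1
  have hsin : 0 < Real.sin (ω*τ) :=
    Real.sin_pos_of_pos_of_lt_pi hωτ.1 (lt_of_le_of_lt hωτ.2 (by linarith))
  -- Part 3
  have ker : ∀ w : ℝ, 0 ≤ w → w ≤ τ → |Real.sin (ω*(τ-w))| ≤ Real.sin (ω*τ) := by
    intro w hw0 hwτ
    have h1 : 0 ≤ ω*(τ-w) := mul_nonneg hωpos.le (by linarith)
    have h2 : ω*(τ-w) ≤ ω*τ := by nlinarith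
    have h3 : ω*(τ-w) ≤ Real.pi/2 := le_trans h2 hωτ.2
    have h4 : 0 ≤ Real.sin (ω*(τ-w)) :=
      Real.sin_nonneg_of_nonneg_of_le_pi h1 (by linarith)
    rw [abs_of_nonneg h4]
    exact Real.strictMonoOn_sin.monotoneOn
      ⟨by linarith, h3⟩ ⟨by linarith, hωτ.2⟩ h2
  refine ⟨hsin, ?_, ker⟩
  -- basic continuity/differentiability facts
  have hgc : Continuous g := hg.continuous
  have hg2c : Continuous (iteratedDeriv 2 g) := gk_cont g hg 2 (by norm_num)
  have hg4c : Continuous (iteratedDeriv 4 g) := gk_cont g hg 4 (by norm_num)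
  have hy1 : ∀ x, HasDerivAt y (deriv y x) x := fun x =>
    ((hy.differentiable (by norm_num)) x).hasDerivAt
  have hdy : ContDiff ℝ 1 (deriv y) := by
    have h := ContDiff.iterate_deriv' 1 1 (f := y) (by exact_mod_cast hy)
    simpa using h
  have hy2 : ∀ x, HasDerivAt (deriv y) (deriv (deriv y) x) x := fun x =>
    ((hdy.differentiable one_ne_zero) x).hasDerivAt
  have hy2c : Continuous (deriv (deriv y)) := hdy.continuous_deriv le_rfl
  have hy1c : Continuous (deriv y) := hdy.continuous
  have hyc : Continuous y := hy.continuous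
  -- the ODE, solved for the second derivative
  have hεC : ((ε:ℝ):ℂ) ≠ 0 := Complex.ofReal_ne_zero.mpr hε.ne'
  have hε2C : ((ε:ℝ):ℂ)^2 ≠ 0 := pow_ne_zero _ hεC
  have hωC : ((ω:ℝ):ℂ) ≠ 0 := Complex.ofReal_ne_zero.mpr hωpos.ne'
  have hω2R : ω^2 * ε^2 = μ^2 + (ε^2)⁻¹ := by
    rw [hω, div_pow, Real.sq_sqrt hX.le]
    field_simp
  have hc' : ((ω:ℝ):ℂ)^2*((ε:ℝ):ℂ)^2 = ((μ:ℝ):ℂ)^2 + (((ε:ℝ):ℂ)^2)⁻¹ := by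
    exact_mod_cast hω2R
  have hεinv : ((ε:ℝ):ℂ)^2 * (((ε:ℝ):ℂ)^2)⁻¹ = 1 := mul_inv_cancel₀ hε2C
  have hy2eq : ∀ s, deriv (deriv y) s
      = -(((ω:ℝ):ℂ)^2 * y s) - (((ε:ℝ):ℂ)^2)⁻¹ * g s := by
    intro s
    apply mul_left_cancel₀ hε2C
    linear_combination hode s + y s * hc' + g s * hεinv
  -- variation of constants
  have hkey : ∀ w : ℝ, HasDerivAt
      (fun w => ((Real.sin (ω*(τ-w)) / ω : ℝ):ℂ) * (deriv y (t+w) - deriv y (t-w))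
        + ((Real.cos (ω*(τ-w)) : ℝ):ℂ) * (y (t+w) + y (t-w)))
      (-((Real.sin (ω*(τ-w)) / (ε^2*ω) : ℝ):ℂ) * (g (t+w) + g (t-w))) w := by
    intro w
    have inner : HasDerivAt (fun w : ℝ => ω*(τ-w)) (-ω) w := by
      simpa using ((hasDerivAt_id w).const_sub τ).const_mul ω
    have hsinw : HasDerivAt (fun w => Real.sin (ω*(τ-w))) (-ω * Real.cos (ω*(τ-w))) w := by
      simpa [mul_comm, Function.comp_def] using (Real.hasDerivAt_sin (ω*(τ-w))).comp w inner
    have hcosw : HasDerivAt (fun w => Real.cos (ω*(τ-w))) (ω * Real.sin (ω*(τ-w))) w := by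
      have := (Real.hasDerivAt_cos (ω*(τ-w))).comp w inner
      refine this.congr_deriv ?_
      ring
    have l1 : HasDerivAt (fun w : ℝ => t + w) 1 w := by
      simpa using (hasDerivAt_id w).const_add t
    have l2 : HasDerivAt (fun w : ℝ => t - w) (-1) w := by
      simpa using (hasDerivAt_id w).const_sub t
    have p1 : HasDerivAt (fun w => deriv y (t+w)) (deriv (deriv y) (t+w)) w := by
      simpa [Function.comp_def] using (hy2 (t+w)).scomp w l1
    have p2 : HasDerivAt (fun w => deriv y (t-w)) (-deriv (deriv y) (t-w)) w := by
      simpa [Function.comp_def] using (hy2 (t-w)).scomp w l2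
    have q1 : HasDerivAt (fun w => y (t+w)) (deriv y (t+w)) w := by
      simpa [Function.comp_def] using (hy1 (t+w)).scomp w l1
    have q2 : HasDerivAt (fun w => y (t-w)) (-deriv y (t-w)) w := by
      simpa [Function.comp_def] using (hy1 (t-w)).scomp w l2
    have A := ((hsinw.div_const ω).ofReal_comp).mul (p1.sub p2)
    have B := (hcosw.ofReal_comp).mul (q1.add q2)
    refine (A.add B).congr_deriv ?_
    simp only [Pi.add_apply, Pi.sub_apply, Pi.mul_apply, Pi.pow_apply, Pi.div_apply]
    rw [hy2eq (t+w), hy2eq (t-w)]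
    push_cast
    field_simp
    ring
  have hkint : IntervalIntegrable
      (fun w => -((Real.sin (ω*(τ-w)) / (ε^2*ω) : ℝ):ℂ) * (g (t+w) + g (t-w)))
      volume 0 τ := by
    apply Continuous.intervalIntegrable
    fun_prop
  have hvar := integral_eq_sub_of_hasDerivAt (fun w _ => hkey w) hkint
  have hint_eq : (∫ w in (0:ℝ)..τ,
        -((Real.sin (ω*(τ-w)) / (ε^2*ω) : ℝ):ℂ) * (g (t+w) + g (t-w)))
      = (y (t+τ) + y (t-τ)) - 2 * ((Real.cos (ω*τ) : ℝ):ℂ) * y t := by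
    rw [hvar]
    norm_num
    ring
  -- rewrite ξ as a single integral
  have hcint : IntervalIntegrable
      (fun w => ((Real.sin (ω*(τ-w)) / (ε^2*ω) : ℝ):ℂ)
        * (2 * g t + (w:ℂ)^2 * iteratedDeriv 2 g t)) volume 0 τ := by
    apply Continuous.intervalIntegrable
    fun_prop
  have hξ2 : ξ = ∫ w in (0:ℝ)..τ, ((Real.sin (ω*(τ-w)) / (ε^2*ω) : ℝ):ℂ) *
      ((2 * g t + (w:ℂ)^2 * iteratedDeriv 2 g t) - (g (t+w) + g (t-w))) := by
    rw [hξ, ← hint_eq, ← intervalIntegral.integral_add hkint hcint]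
    apply intervalIntegral.integral_congr
    intro w _
    ring
  -- the inner integral
  set I : ℝ → ℝ := fun w => ∫ ρ in (0:ℝ)..1,
      (‖iteratedDeriv 4 g (t + ρ * w)‖ + ‖iteratedDeriv 4 g (t - ρ * w)‖) with hI
  have hIcont : Continuous I := by
    apply intervalIntegral.continuous_parametric_intervalIntegral_of_continuous'
    apply Continuous.add
    · apply Continuous.norm
      apply hg4c.comp
      fun_prop
    · apply Continuous.norm
      apply hg4c.comp
      fun_prop
  have hInn : ∀ w, 0 ≤ I w := fun w =>
    intervalIntegral.integral_nonneg (by norm_num) (fun ρ _ => by positivity)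
  -- pointwise bound
  have hFb : ∀ w ∈ Set.Icc (0:ℝ) τ,
      ‖((Real.sin (ω*(τ-w)) / (ε^2*ω) : ℝ):ℂ) *
        ((2 * g t + (w:ℂ)^2 * iteratedDeriv 2 g t) - (g (t+w) + g (t-w)))‖
      ≤ (Real.sin (ω*τ)/(ε^2*ω)) * ((τ^4/6) * I w) := by
    intro w hw
    have e1 : ((Real.sin (ω*(τ-w)) / (ε^2*ω) : ℝ):ℂ) *
        ((2 * g t + (w:ℂ)^2 * iteratedDeriv 2 g t) - (g (t+w) + g (t-w)))
      = -(((Real.sin (ω*(τ-w)) / (ε^2*ω) : ℝ):ℂ) *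
          ∫ ρ in (0:ℝ)..1, (((1-ρ)^3 * w^4 / 6 : ℝ) : ℂ)
            * (iteratedDeriv 4 g (t+ρ*w) + iteratedDeriv 4 g (t-ρ*w))) := by
      rw [taylor_step g hg t w]
      ring
    rw [e1, norm_neg, norm_mul, Complex.norm_real]
    have hc1 : ‖Real.sin (ω*(τ-w)) / (ε^2*ω)‖ ≤ Real.sin (ω*τ)/(ε^2*ω) := by
      rw [Real.norm_eq_abs, abs_div, abs_of_pos (show (0:ℝ) < ε^2*ω by positivity)]
      gcongr
      exact ker w hw.1 hw.2
    have hRint : IntervalIntegrable (fun ρ : ℝ => ‖(((1-ρ)^3 * w^4 / 6 : ℝ) : ℂ)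
        * (iteratedDeriv 4 g (t+ρ*w) + iteratedDeriv 4 g (t-ρ*w))‖) volume 0 1 := by
      apply Continuous.intervalIntegrable
      fun_prop
    have hnint : IntervalIntegrable (fun ρ : ℝ => (τ^4/6) *
        (‖iteratedDeriv 4 g (t + ρ * w)‖ + ‖iteratedDeriv 4 g (t - ρ * w)‖)) volume 0 1 := by
      apply Continuous.intervalIntegrable
      fun_prop
    have hc2 : ‖∫ ρ in (0:ℝ)..1, (((1-ρ)^3 * w^4 / 6 : ℝ) : ℂ)
        * (iteratedDeriv 4 g (t+ρ*w) + iteratedDeriv 4 g (t-ρ*w))‖ ≤ (τ^4/6) * I w := by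
      calc ‖∫ ρ in (0:ℝ)..1, (((1-ρ)^3 * w^4 / 6 : ℝ) : ℂ)
            * (iteratedDeriv 4 g (t+ρ*w) + iteratedDeriv 4 g (t-ρ*w))‖
          ≤ ∫ ρ in (0:ℝ)..1, ‖(((1-ρ)^3 * w^4 / 6 : ℝ) : ℂ)
            * (iteratedDeriv 4 g (t+ρ*w) + iteratedDeriv 4 g (t-ρ*w))‖ :=
            intervalIntegral.norm_integral_le_integral_norm (by norm_num)
        _ ≤ ∫ ρ in (0:ℝ)..1, (τ^4/6) *
            (‖iteratedDeriv 4 g (t + ρ * w)‖ + ‖iteratedDeriv 4 g (t - ρ * w)‖) := by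
            apply intervalIntegral.integral_mono_on (by norm_num) hRint hnint
            intro ρ hρ
            rw [norm_mul, Complex.norm_real, Real.norm_eq_abs]
            have hco : |(1-ρ)^3 * w^4 / 6| ≤ τ^4/6 := by
              rw [abs_div, abs_mul]
              have h1 : |(1-ρ)^3| ≤ 1 := by
                rw [abs_pow]
                apply pow_le_one₀ (abs_nonneg _)
                rw [abs_le]
                constructor <;> [linarith [hρ.2]; linarith [hρ.1]]
              have h2 : |w^4| ≤ τ^4 := by
                rw [abs_pow, abs_of_nonneg hw.1]
                exact pow_le_pow_left₀ hw.1 hw.2 4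
              calc |(1-ρ)^3| * |w^4| / |(6:ℝ)| ≤ 1 * τ^4 / 6 := by
                    rw [show |(6:ℝ)| = 6 by norm_num]
                    gcongr
                _ = τ^4/6 := by ring
            exact mul_le_mul hco (norm_add_le _ _) (norm_nonneg _) (by positivity)
        _ = (τ^4/6) * I w := by
            simp only [hI]
            rw [← intervalIntegral.integral_const_mul]
    exact mul_le_mul hc1 hc2 (norm_nonneg _) (by positivity)
  -- assemble
  have hFcont : Continuous (fun w => ((Real.sin (ω*(τ-w)) / (ε^2*ω) : ℝ):ℂ) *
      ((2 * g t + (w:ℂ)^2 * iteratedDeriv 2 g t) - (g (t+w) + g (t-w)))) := by fun_prop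
  have hnorm : ‖ξ‖ ≤ (Real.sin (ω*τ)/(ε^2*ω)) * ((τ^4/6) * ∫ w in (0:ℝ)..τ, I w) := by
    rw [hξ2]
    calc ‖∫ w in (0:ℝ)..τ, ((Real.sin (ω*(τ-w)) / (ε^2*ω) : ℝ):ℂ) *
          ((2 * g t + (w:ℂ)^2 * iteratedDeriv 2 g t) - (g (t+w) + g (t-w)))‖
        ≤ ∫ w in (0:ℝ)..τ, ‖((Real.sin (ω*(τ-w)) / (ε^2*ω) : ℝ):ℂ) *
          ((2 * g t + (w:ℂ)^2 * iteratedDeriv 2 g t) - (g (t+w) + g (t-w)))‖ :=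
          intervalIntegral.norm_integral_le_integral_norm hτ.le
      _ ≤ ∫ w in (0:ℝ)..τ, (Real.sin (ω*τ)/(ε^2*ω)) * ((τ^4/6) * I w) := by
          apply intervalIntegral.integral_mono_on hτ.le
            (hFcont.norm.intervalIntegrable 0 τ)
            (by apply Continuous.intervalIntegrable; fun_prop) hFb
      _ = (Real.sin (ω*τ)/(ε^2*ω)) * ((τ^4/6) * ∫ w in (0:ℝ)..τ, I w) := by
          rw [intervalIntegral.integral_const_mul, intervalIntegral.integral_const_mul]
  have hsqeq : ε^2*ω = Real.sqrt (1 + ε^2*μ^2) := by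
    rw [hε2ω, add_comm]
  have hJnn : 0 ≤ ∫ w in (0:ℝ)..τ, I w :=
    intervalIntegral.integral_nonneg hτ.le (fun w _ => hInn w)
  rw [norm_div, Complex.norm_real, Real.norm_eq_abs, abs_of_pos hsin, div_le_iff₀ hsin]
  calc ‖ξ‖ ≤ (Real.sin (ω*τ)/(ε^2*ω)) * ((τ^4/6) * ∫ w in (0:ℝ)..τ, I w) := hnorm
    _ = (τ ^ 4 / (6 * Real.sqrt (1 + ε ^ 2 * μ ^ 2)) * ∫ w in (0:ℝ)..τ, I w)
        * Real.sin (ω*τ) := by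
        rw [hsqeq]
        have : Real.sqrt (1 + ε^2*μ^2) ≠ 0 := by rw [← hsqeq]; positivity
        field_simp
end

section
/- There exists a constant C > 0, depending only on f, R and b−a, such that for all continuously differentiable functions u, v : [a,b] → ℝ with ‖u‖_{L∞} ≤ R, ‖v‖_{L∞} ≤ R and ∫ₐᵇ |v'(x)|² dx ≤ R², one has ‖f∘u − f∘v‖_{H¹} ≤ C·‖u − v‖_{H¹}. -/
/-!
Write `w = u - v`. The derivative of `f ∘ u - f ∘ v` is `f' (u) w' + (f' (u) - f' (v)) v'`, and on
`[-R, R]` the function `f'` is bounded by some `M₁` and Lipschitz with some constant `M₂`; hence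
pointwise `(f ∘ u - f ∘ v)² + (f ∘ u - f ∘ v)'² ≤ 2 M₁² (w² + w'²) + 2 M₂² w² v'²`. The last term
is controlled by the one-dimensional Sobolev embedding `‖w‖²_∞ ≤ (1 / (b - a) + 1) ‖w‖²_{H¹}`
together with `∫ v'² ≤ R²`. The embedding itself compares `w x ²` with the minimum of `w²` on
`[a, b]`, which is at most the mean of `w²`, and bounds the difference by `∫ |2 w w'| ≤ ‖w‖²_{H¹}`.
-/

open MeasureTheory intervalIntegral

/-- The `H¹(a,b)` norm of a function `w : [a,b] → ℝ`, computed with the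
derivative within `[a,b]`. -/
noncomputable def H1Norm (a b : ℝ) (w : ℝ → ℝ) : ℝ :=
  Real.sqrt (∫ x in a..b, ((w x) ^ 2 + (derivWithin w (Set.Icc a b) x) ^ 2))

open Set
open scoped Interval

theorem abs_integral_le_integral_abs_of_mem_Icc {g : ℝ → ℝ} {a b x y : ℝ}
    (hg : IntervalIntegrable g volume a b) (hx : x ∈ Icc a b) (hy : y ∈ Icc a b) :
    |∫ t in x..y, g t| ≤ ∫ t in a..b, |g t| := by
  have hab : a ≤ b := hx.1.trans hx.2
  have hsub : Ι x y ⊆ Ioc a b := by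
    rw [← uIoc_of_le hab]
    exact uIoc_subset_uIoc_of_uIcc_subset_uIcc (uIcc_subset_Icc hx hy |>.trans Icc_subset_uIcc)
  calc |∫ t in x..y, g t|
    _ ≤ ∫ t in Ι x y, |g t| := by
      simpa only [Real.norm_eq_abs] using norm_integral_le_integral_norm_uIoc (f := g)
    _ ≤ ∫ t in Ioc a b, |g t| :=
      setIntegral_mono_set hg.1.abs (ae_of_all _ fun t => abs_nonneg (g t))
        hsub.eventuallyLE
    _ = ∫ t in a..b, |g t| := (integral_of_le hab).symm

theorem ContDiff.exists_abs_deriv_le_and_abs_sub_le {g : ℝ → ℝ} (hg : ContDiff ℝ 1 g)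
    {s : Set ℝ} (hs : IsCompact s) (hs' : Convex ℝ s) :
    ∃ M, (∀ z ∈ s, |deriv g z| ≤ M) ∧ ∀ p ∈ s, ∀ q ∈ s, |g p - g q| ≤ M * |p - q| := by
  obtain ⟨M, hM⟩ := hs.exists_bound_of_continuousOn (hg.continuous_deriv le_rfl).continuousOn
  refine ⟨M, hM, fun p hp q hq => ?_⟩
  simpa only [Real.norm_eq_abs] using
    hs'.norm_image_sub_le_of_norm_deriv_le (fun z _ => hg.differentiable one_ne_zero z) hM hq hp

theorem sq_sub_add_sq_mul_sub_mul_le {y z y' z' fy fz dy dz M₁ M₂ : ℝ}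
    (hf : |fy - fz| ≤ M₁ * |y - z|) (hd : |dy| ≤ M₁) (hdd : |dy - dz| ≤ M₂ * |y - z|) :
    (fy - fz) ^ 2 + (dy * y' - dz * z') ^ 2 ≤
      2 * M₁ ^ 2 * ((y - z) ^ 2 + (y' - z') ^ 2) + 2 * M₂ ^ 2 * (y - z) ^ 2 * z' ^ 2 := by
  have h₀ : (fy - fz) ^ 2 ≤ M₁ ^ 2 * (y - z) ^ 2 := by
    simpa only [sq_abs, mul_pow] using pow_le_pow_left₀ (abs_nonneg _) hf 2
  have h₁ : |dy * y' - dz * z'| ≤ M₁ * |y' - z'| + M₂ * |y - z| * |z'| :=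
    calc |dy * y' - dz * z'| = |dy * (y' - z') + (dy - dz) * z'| := by ring_nf
      _ ≤ |dy| * |y' - z'| + |dy - dz| * |z'| := by
        simpa only [abs_mul] using abs_add_le (dy * (y' - z')) ((dy - dz) * z')
      _ ≤ M₁ * |y' - z'| + M₂ * |y - z| * |z'| := by gcongr
  have h₂ : (dy * y' - dz * z') ^ 2 ≤
      2 * M₁ ^ 2 * (y' - z') ^ 2 + 2 * M₂ ^ 2 * (y - z) ^ 2 * z' ^ 2 :=
    calc (dy * y' - dz * z') ^ 2 ≤ (M₁ * |y' - z'| + M₂ * |y - z| * |z'|) ^ 2 := by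
          simpa only [sq_abs] using pow_le_pow_left₀ (abs_nonneg _) h₁ 2
      _ ≤ 2 * ((M₁ * |y' - z'|) ^ 2 + (M₂ * |y - z| * |z'|) ^ 2) := add_sq_le
      _ = 2 * M₁ ^ 2 * (y' - z') ^ 2 + 2 * M₂ ^ 2 * (y - z) ^ 2 * z' ^ 2 := by
        simp only [mul_pow, sq_abs]; ring
  nlinarith [sq_nonneg M₁, sq_nonneg (y - z)]

theorem derivWithin_comp_sub_comp {f u v : ℝ → ℝ} {s : Set ℝ} {x : ℝ}
    (hfu : DifferentiableAt ℝ f (u x)) (hfv : DifferentiableAt ℝ f (v x))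
    (hu : DifferentiableWithinAt ℝ u s x) (hv : DifferentiableWithinAt ℝ v s x)
    (hs : UniqueDiffWithinAt ℝ s x) :
    derivWithin (fun y => f (u y) - f (v y)) s x =
      deriv f (u x) * derivWithin u s x - deriv f (v x) * derivWithin v s x :=
  ((hfu.hasDerivAt.comp_hasDerivWithinAt x hu.hasDerivWithinAt).sub
    (hfv.hasDerivAt.comp_hasDerivWithinAt x hv.hasDerivWithinAt)).derivWithin hs

section H1

variable {a b : ℝ} {w : ℝ → ℝ}

theorem H1Norm_nonneg : 0 ≤ H1Norm a b w := Real.sqrt_nonneg _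

theorem H1Norm_sq (hab : a ≤ b) :
    H1Norm a b w ^ 2 = ∫ x in a..b, (w x ^ 2 + derivWithin w (Icc a b) x ^ 2) :=
  Real.sq_sqrt (integral_nonneg hab fun _ _ => by positivity)

theorem ContDiffOn.intervalIntegrable_sq_add_sq_derivWithin (hab : a < b)
    (hw : ContDiffOn ℝ 1 w (Icc a b)) :
    IntervalIntegrable (fun x => w x ^ 2 + derivWithin w (Icc a b) x ^ 2) volume a b :=
  ((hw.continuousOn.pow 2).add
    ((hw.continuousOn_derivWithin (uniqueDiffOn_Icc hab) le_rfl).pow 2)).intervalIntegrable_of_Icc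
    hab.le

theorem ContDiffOn.sq_sub_sq_eq_integral (hab : a < b) (hw : ContDiffOn ℝ 1 w (Icc a b))
    {x y : ℝ} (hx : x ∈ Icc a b) (hy : y ∈ Icc a b) :
    w x ^ 2 - w y ^ 2 = ∫ t in y..x, 2 * w t * derivWithin w (Icc a b) t := by
  have hsub : uIcc y x ⊆ Icc a b := uIcc_subset_Icc hy hx
  have hw' := hw.continuousOn_derivWithin (uniqueDiffOn_Icc hab) le_rfl
  refine (integral_eq_sub_of_hasDeriv_right ((hw.continuousOn.mono hsub).pow 2) ?_ ?_).symm
  · intro t ht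
    have ht' : t ∈ Ioo a b := ⟨(le_min hy.1 hx.1).trans_lt ht.1, ht.2.trans_le (max_le hy.2 hx.2)⟩
    have hwt : HasDerivAt w (derivWithin w (Icc a b) t) t :=
      ((hw.differentiableOn one_ne_zero t (Ioo_subset_Icc_self ht')).hasDerivWithinAt).hasDerivAt
        (Icc_mem_nhds ht'.1 ht'.2)
    convert (hwt.pow 2).hasDerivWithinAt using 1
    ring
  · exact (((continuousOn_const.mul hw.continuousOn).mul hw').mono hsub).intervalIntegrable

theorem ContDiffOn.sq_le_mul_H1Norm_sq (hab : a < b) (hw : ContDiffOn ℝ 1 w (Icc a b))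
    {x : ℝ} (hx : x ∈ Icc a b) : w x ^ 2 ≤ (1 / (b - a) + 1) * H1Norm a b w ^ 2 := by
  set w' := derivWithin w (Icc a b)
  have hwc := hw.continuousOn
  have hw'c : ContinuousOn w' (Icc a b) :=
    hw.continuousOn_derivWithin (uniqueDiffOn_Icc hab) le_rfl
  have hw2int : IntervalIntegrable (fun t => w t ^ 2) volume a b :=
    (hwc.pow 2).intervalIntegrable_of_Icc hab.le
  rw [H1Norm_sq hab.le]
  set S := ∫ t in a..b, (w t ^ 2 + w' t ^ 2)
  obtain ⟨y, hy, hymin⟩ := isCompact_Icc.exists_isMinOn (nonempty_Icc.mpr hab.le) (hwc.pow 2)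
  have hmin : (b - a) * w y ^ 2 ≤ S :=
    calc (b - a) * w y ^ 2 = ∫ t in a..b, w y ^ 2 := by simp
      _ ≤ ∫ t in a..b, w t ^ 2 := integral_mono_on hab.le intervalIntegrable_const hw2int
          fun t ht => hymin ht
      _ ≤ S := integral_mono_on hab.le hw2int (hw.intervalIntegrable_sq_add_sq_derivWithin hab)
          fun t _ => le_add_of_nonneg_right (sq_nonneg _)
  have hosc : w x ^ 2 - w y ^ 2 ≤ S :=
    calc w x ^ 2 - w y ^ 2 = ∫ t in y..x, 2 * w t * w' t := hw.sq_sub_sq_eq_integral hab hx hy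
      _ ≤ |∫ t in y..x, 2 * w t * w' t| := le_abs_self _
      _ ≤ ∫ t in a..b, |2 * w t * w' t| := abs_integral_le_integral_abs_of_mem_Icc
          (((continuousOn_const.mul hwc).mul hw'c).intervalIntegrable_of_Icc hab.le) hy hx
      _ ≤ S := integral_mono_on hab.le
          (((continuousOn_const.mul hwc).mul hw'c).abs.intervalIntegrable_of_Icc hab.le)
          (hw.intervalIntegrable_sq_add_sq_derivWithin hab)
          fun t _ => abs_le.mpr ⟨by nlinarith [sq_nonneg (w t + w' t)], two_mul_le_add_sq _ _⟩
  have hy2 : w y ^ 2 ≤ S / (b - a) := by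
    rw [le_div_iff₀ (sub_pos.2 hab)]
    linarith
  calc w x ^ 2 ≤ S / (b - a) + S := by linarith
    _ = (1 / (b - a) + 1) * S := by ring

end H1

theorem H1Norm_comp_sub_comp_sq_le {a b M₁ M₂ : ℝ} (hab : a < b) {f u v : ℝ → ℝ}
    (hf : ContDiff ℝ 1 f) (hu : ContDiffOn ℝ 1 u (Icc a b)) (hv : ContDiffOn ℝ 1 v (Icc a b))
    (hfuv : ∀ x ∈ Icc a b, |f (u x) - f (v x)| ≤ M₁ * |u x - v x|)
    (hf'u : ∀ x ∈ Icc a b, |deriv f (u x)| ≤ M₁)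
    (hf'uv : ∀ x ∈ Icc a b, |deriv f (u x) - deriv f (v x)| ≤ M₂ * |u x - v x|) :
    H1Norm a b (fun x => f (u x) - f (v x)) ^ 2 ≤
      (2 * M₁ ^ 2 + 2 * M₂ ^ 2 * (1 / (b - a) + 1) *
        ∫ x in a..b, derivWithin v (Icc a b) x ^ 2) * H1Norm a b (fun x => u x - v x) ^ 2 := by
  set S := H1Norm a b (fun x => u x - v x) ^ 2 with hS
  set c := 2 * M₂ ^ 2 * (1 / (b - a) + 1) * S
  have hdiff := hf.differentiable one_ne_zero
  have hs := uniqueDiffOn_Icc hab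
  have hfuv' : ContDiffOn ℝ 1 (fun x => f (u x) - f (v x)) (Icc a b) :=
    (hf.comp_contDiffOn hu).sub (hf.comp_contDiffOn hv)
  have hv'2int : IntervalIntegrable (fun x => derivWithin v (Icc a b) x ^ 2) volume a b :=
    ((hv.continuousOn_derivWithin hs le_rfl).pow 2).intervalIntegrable_of_Icc hab.le
  have hpoint : ∀ x ∈ Icc a b,
      (f (u x) - f (v x)) ^ 2 + derivWithin (fun y => f (u y) - f (v y)) (Icc a b) x ^ 2 ≤
        2 * M₁ ^ 2 * ((u x - v x) ^ 2 + derivWithin (fun y => u y - v y) (Icc a b) x ^ 2) +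
          c * derivWithin v (Icc a b) x ^ 2 := by
    intro x hx
    have hux := hu.differentiableOn one_ne_zero x hx
    have hvx := hv.differentiableOn one_ne_zero x hx
    rw [derivWithin_comp_sub_comp (hdiff _) (hdiff _) hux hvx (hs x hx),
      derivWithin_fun_sub hux hvx]
    calc _ ≤ 2 * M₁ ^ 2 * ((u x - v x) ^ 2 +
            (derivWithin u (Icc a b) x - derivWithin v (Icc a b) x) ^ 2) +
          2 * M₂ ^ 2 * (u x - v x) ^ 2 * derivWithin v (Icc a b) x ^ 2 :=
        sq_sub_add_sq_mul_sub_mul_le (hfuv x hx) (hf'u x hx) (hf'uv x hx)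
      _ ≤ _ := by
        have hsob := (hu.sub hv).sq_le_mul_H1Norm_sq hab hx
        gcongr
        calc 2 * M₂ ^ 2 * (u x - v x) ^ 2 ≤ 2 * M₂ ^ 2 * ((1 / (b - a) + 1) * S) := by gcongr
          _ = c := by ring
  rw [H1Norm_sq hab.le]
  calc _ ≤ ∫ x in a..b, (2 * M₁ ^ 2 * ((u x - v x) ^ 2 +
          derivWithin (fun y => u y - v y) (Icc a b) x ^ 2) + c * derivWithin v (Icc a b) x ^ 2) :=
        integral_mono_on hab.le (hfuv'.intervalIntegrable_sq_add_sq_derivWithin hab)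
          (((hu.sub hv).intervalIntegrable_sq_add_sq_derivWithin hab).const_mul _ |>.add
            (hv'2int.const_mul _)) hpoint
    _ = 2 * M₁ ^ 2 * S + c * ∫ x in a..b, derivWithin v (Icc a b) x ^ 2 := by
        rw [integral_add (((hu.sub hv).intervalIntegrable_sq_add_sq_derivWithin hab).const_mul _)
          (hv'2int.const_mul _), intervalIntegral.integral_const_mul,
          intervalIntegral.integral_const_mul, hS, H1Norm_sq hab.le]
    _ = _ := by ring

theorem composition_H1_lipschitz_general
    (L R : ℝ)
    (f : ℝ → ℝ) (hf : ContDiff ℝ 2 f) :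
    ∃ C : ℝ, 0 < C ∧ ∀ a b : ℝ, a < b → b - a = L →
      ∀ u v : ℝ → ℝ,
        ContDiffOn ℝ 1 u (Set.Icc a b) → ContDiffOn ℝ 1 v (Set.Icc a b) →
        (∀ x ∈ Set.Icc a b, |u x| ≤ R) →
        (∀ x ∈ Set.Icc a b, |v x| ≤ R) →
        (∫ x in a..b, (derivWithin v (Set.Icc a b) x) ^ 2) ≤ R ^ 2 →
        H1Norm a b (fun x => f (u x) - f (v x)) ≤ C * H1Norm a b (fun x => u x - v x) := by
  have hf₁ : ContDiff ℝ 1 f := hf.of_le one_le_two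
  obtain ⟨M₁, hf'M₁, hfLip⟩ :=
    hf₁.exists_abs_deriv_le_and_abs_sub_le isCompact_Icc (convex_Icc (-R) R)
  obtain ⟨M₂, -, hf'Lip⟩ :=
    (hf.deriv' : ContDiff ℝ 1 (deriv f)).exists_abs_deriv_le_and_abs_sub_le isCompact_Icc
      (convex_Icc (-R) R)
  set K := 2 * M₁ ^ 2 + 2 * M₂ ^ 2 * (1 / L + 1) * R ^ 2
  refine ⟨√K + 1, by positivity, fun a b hab hL u v hu hv huR hvR hv'R => ?_⟩
  have hu_mem x (hx : x ∈ Icc a b) : u x ∈ Icc (-R) R := abs_le.mp (huR x hx)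
  have hv_mem x (hx : x ∈ Icc a b) : v x ∈ Icc (-R) R := abs_le.mp (hvR x hx)
  have hL₀ : 0 < L := hL ▸ sub_pos.2 hab
  have hK : H1Norm a b (fun x => f (u x) - f (v x)) ^ 2 ≤
      K * H1Norm a b (fun x => u x - v x) ^ 2 := by
    refine (H1Norm_comp_sub_comp_sq_le hab hf₁ hu hv
      (fun x hx => hfLip _ (hu_mem x hx) _ (hv_mem x hx)) (fun x hx => hf'M₁ _ (hu_mem x hx))
      (fun x hx => hf'Lip _ (hu_mem x hx) _ (hv_mem x hx))).trans ?_
    rw [hL]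
    gcongr
    simp only [K]
    gcongr
  calc H1Norm a b (fun x => f (u x) - f (v x))
      ≤ √(K * H1Norm a b (fun x => u x - v x) ^ 2) := (le_abs_self _).trans (Real.abs_le_sqrt hK)
    _ = √K * H1Norm a b (fun x => u x - v x) := by
      rw [Real.sqrt_mul' _ (sq_nonneg _), Real.sqrt_sq H1Norm_nonneg]
    _ ≤ (√K + 1) * H1Norm a b (fun x => u x - v x) := by
      gcongr
      · exact H1Norm_nonneg
      · linarith

/-- `H¹`-Lipschitz bound for composition with a `C²` nonlinearity:
there is a constant `C > 0` depending only on `f`, `R` and the interval length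
`L = b − a` such that for all `C¹` functions `u, v` on `[a,b]` with
`‖u‖_{L∞} ≤ R`, `‖v‖_{L∞} ≤ R` and `∫ₐᵇ |v'|² ≤ R²`, one has
`‖f∘u − f∘v‖_{H¹} ≤ C‖u − v‖_{H¹}`. -/
theorem composition_H1_lipschitz
    (L R : ℝ) (hL : 0 < L) (hR : 0 < R)
    (f : ℝ → ℝ) (hf : ContDiff ℝ 2 f) :
    ∃ C : ℝ, 0 < C ∧ ∀ a b : ℝ, a < b → b - a = L →
      ∀ u v : ℝ → ℝ,
        ContDiffOn ℝ 1 u (Set.Icc a b) → ContDiffOn ℝ 1 v (Set.Icc a b) →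
        (∀ x ∈ Set.Icc a b, |u x| ≤ R) →
        (∀ x ∈ Set.Icc a b, |v x| ≤ R) →
        (∫ x in a..b, (derivWithin v (Set.Icc a b) x) ^ 2) ≤ R ^ 2 →
        H1Norm a b (fun x => f (u x) - f (v x)) ≤ C * H1Norm a b (fun x => u x - v x) :=
  composition_H1_lipschitz_general L R f hf
end

section
/- Define the first-step truncation errors ξ¹ := y(τ) − cos(ωτ)·y(0) − (sin(ωτ)/ω)·y'(0) + ∫₀^τ [sin(ω(τ−w))/(ε²ω)]·[g(0) + w·g'(0) + (w²/2)·g''(0)] dw and ξ̇¹ := y'(τ) + ω·sin(ωτ)·y(0) − cos(ωτ)·y'(0) + ∫₀^τ [cos(ω(τ−w))/ε²]·[g(0) + w·g'(0) + (w²/2)·g''(0)] dw. Then |ξ¹| ≤ [τ³/(2√(1+ε²μ²))]·∫₀^τ ∫₀¹ |g'''(ρw)| dρ dw and |ξ̇¹| ≤ [τ³/(2ε²)]·∫₀^τ ∫₀¹ |g'''(ρw)| dρ dw. -/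
open MeasureTheory intervalIntegral

lemma cd_deriv {n : ℕ} (g : ℝ → ℂ) (hg : ContDiff ℝ ((n:ℕ∞)+1) g) : ContDiff ℝ n (deriv g) :=
  (contDiff_succ_iff_deriv.mp hg).2.2

lemma cd_iter (g : ℝ → ℂ) (hg : ContDiff ℝ 3 g) :
    ContDiff ℝ 1 (iteratedDeriv 2 g) := by
  rw [iteratedDeriv_succ, iteratedDeriv_one]
  exact cd_deriv _ (cd_deriv g hg)

lemma taylor2_int (g : ℝ → ℂ) (hg : ContDiff ℝ 3 g) (w : ℝ) :
    g w - (g 0 + (w : ℂ) * deriv g 0 + ((w : ℂ) ^ 2 / 2) * iteratedDeriv 2 g 0)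
      = ∫ s in (0:ℝ)..w, (((w - s) ^ 2 / 2 : ℝ) : ℂ) * iteratedDeriv 3 g s := by
  have hg2 : ContDiff ℝ 2 (deriv g) := cd_deriv g hg
  have hg3 : ContDiff ℝ 1 (iteratedDeriv 2 g) := cd_iter g hg
  have hd2 : ∀ s, deriv (deriv g) s = iteratedDeriv 2 g s := by
    intro s; rw [iteratedDeriv_succ, iteratedDeriv_one]
  have hd3 : ∀ s, deriv (iteratedDeriv 2 g) s = iteratedDeriv 3 g s := by
    intro s; rw [← iteratedDeriv_succ]
  set R : ℝ → ℂ := fun s => g w - g s - ((w - s : ℝ) : ℂ) * deriv g s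
      - (((w - s) ^ 2 / 2 : ℝ) : ℂ) * iteratedDeriv 2 g s with hR
  have key : ∀ s ∈ Set.uIcc (0:ℝ) w,
      HasDerivAt R (-((((w - s) ^ 2 / 2 : ℝ) : ℂ) * iteratedDeriv 3 g s)) s := by
    intro s _
    have h1 : HasDerivAt g (deriv g s) s :=
      (hg.differentiable (by norm_num)).differentiableAt.hasDerivAt
    have h2 : HasDerivAt (deriv g) (iteratedDeriv 2 g s) s := by
      rw [← hd2]
      exact (hg2.differentiable (by norm_num)).differentiableAt.hasDerivAt
    have h3 : HasDerivAt (iteratedDeriv 2 g) (iteratedDeriv 3 g s) s := by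
      rw [← hd3]
      exact (hg3.differentiable (by norm_num)).differentiableAt.hasDerivAt
    have ha : HasDerivAt (fun s : ℝ => ((w - s : ℝ) : ℂ)) (-1 : ℝ) s := by
      exact HasDerivAt.ofReal_comp (by simpa using ((hasDerivAt_id s).const_sub w))
    have hb : HasDerivAt (fun s : ℝ => (((w - s) ^ 2 / 2 : ℝ) : ℂ)) (-(w - s) : ℝ) s := by
      apply HasDerivAt.ofReal_comp
      have h : HasDerivAt (fun s : ℝ => (w - s) ^ 2 / 2) ((2 * (w - s) ^ 1 * (-1)) / 2) s :=
        (((hasDerivAt_id s).const_sub w).pow 2).div_const 2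
      convert h using 1
      ring
    have := (((hasDerivAt_const s (g w)).sub h1).sub (ha.mul h2)).sub (hb.mul h3)
    refine this.congr_deriv ?_
    push_cast
    ring
  have hcont : Continuous (fun s => -((((w - s) ^ 2 / 2 : ℝ) : ℂ) * iteratedDeriv 3 g s)) := by
    have : Continuous (iteratedDeriv 3 g) := by
      rw [iteratedDeriv_succ]
      exact ((cd_deriv _ (cd_iter g hg) : ContDiff ℝ 0 _)).continuous
    fun_prop
  have hint := intervalIntegral.integral_eq_sub_of_hasDerivAt key
    (hcont.intervalIntegrable 0 w)
  have hR0 : R 0 = g w - (g 0 + (w : ℂ) * deriv g 0 + ((w : ℂ) ^ 2 / 2) * iteratedDeriv 2 g 0) := by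
    simp [hR]; ring
  have hRw : R w = 0 := by simp [hR]
  rw [intervalIntegral.integral_neg, hRw, zero_sub, neg_inj] at hint
  rw [← hR0, hint]

lemma cont_g3 (g : ℝ → ℂ) (hg : ContDiff ℝ 3 g) : Continuous (iteratedDeriv 3 g) := by
  rw [iteratedDeriv_succ]
  exact ((cd_deriv _ (cd_iter g hg) : ContDiff ℝ 0 _)).continuous
lemma duhamel (ε ω : ℝ) (hε : (0:ℝ) < ε) (hω : 0 < ω)
    (g : ℝ → ℂ) (hgc : Continuous g)
    (y : ℝ → ℂ) (hy : ContDiff ℝ 2 y)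
    (hy'' : ∀ t, deriv (deriv y) t = -((ω:ℂ))^2 * y t - g t / (ε:ℂ)^2)
    (τ : ℝ) :
    (y τ - (Real.cos (ω * τ) : ℂ) * y 0 - ((Real.sin (ω * τ) / ω : ℝ) : ℂ) * deriv y 0
      = -∫ w in (0:ℝ)..τ, ((Real.sin (ω * (τ - w)) / (ε ^ 2 * ω) : ℝ) : ℂ) * g w)
    ∧ (deriv y τ + ((ω * Real.sin (ω * τ) : ℝ) : ℂ) * y 0 - (Real.cos (ω * τ) : ℂ) * deriv y 0
      = -∫ w in (0:ℝ)..τ, ((Real.cos (ω * (τ - w)) / ε ^ 2 : ℝ) : ℂ) * g w) := by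
  have hω' : ω ≠ 0 := hω.ne'
  have hεc : (ε:ℂ) ≠ 0 := Complex.ofReal_ne_zero.mpr hε.ne'
  have hωc : (ω:ℂ) ≠ 0 := Complex.ofReal_ne_zero.mpr hω.ne'
  have dy : ∀ w, HasDerivAt y (deriv y w) w := fun w =>
    ((hy.differentiable (by norm_num)) w).hasDerivAt
  have dy' : ∀ w, HasDerivAt (deriv y) (deriv (deriv y) w) w := fun w =>
    (((cd_deriv y hy).differentiable (by norm_num)) w).hasDerivAt
  have hlin : ∀ w : ℝ, HasDerivAt (fun w : ℝ => ω * (τ - w)) (-ω) w := by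
    intro w
    simpa using ((hasDerivAt_id w).const_sub τ).const_mul ω
  have hcos : ∀ w : ℝ, HasDerivAt (fun w : ℝ => Real.cos (ω * (τ - w)))
      (ω * Real.sin (ω * (τ - w))) w := by
    intro w
    have := (Real.hasDerivAt_cos (ω * (τ - w))).comp w (hlin w)
    refine this.congr_deriv ?_; ring
  have hsin : ∀ w : ℝ, HasDerivAt (fun w : ℝ => Real.sin (ω * (τ - w)))
      (-(ω * Real.cos (ω * (τ - w)))) w := by
    intro w
    have := (Real.hasDerivAt_sin (ω * (τ - w))).comp w (hlin w)
    refine this.congr_deriv ?_; ring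
  constructor
  · set F : ℝ → ℂ := fun w => (Real.cos (ω * (τ - w)) : ℂ) * y w
      + ((Real.sin (ω * (τ - w)) / ω : ℝ) : ℂ) * deriv y w with hF
    have key : ∀ w ∈ Set.uIcc (0:ℝ) τ, HasDerivAt F
        (-(((Real.sin (ω * (τ - w)) / (ε ^ 2 * ω) : ℝ) : ℂ) * g w)) w := by
      intro w _
      have h1 := ((hcos w).ofReal_comp.mul (dy w))
      have h2' : HasDerivAt (fun w : ℝ => Real.sin (ω * (τ - w)) / ω)
          (-Real.cos (ω * (τ - w))) w := by
        have := (hsin w).div_const ω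
        refine this.congr_deriv ?_; field_simp
      have h2 := (h2'.ofReal_comp.mul (dy' w))
      have := h1.add h2
      refine this.congr_deriv ?_
      rw [hy'' w]
      push_cast
      field_simp
      ring
    have hcont : Continuous fun w =>
        -(((Real.sin (ω * (τ - w)) / (ε ^ 2 * ω) : ℝ) : ℂ) * g w) := by fun_prop
    have hint := intervalIntegral.integral_eq_sub_of_hasDerivAt key
      (hcont.intervalIntegrable 0 τ)
    rw [intervalIntegral.integral_neg] at hint
    have hFτ : F τ = y τ := by simp [hF]
    have hF0 : F 0 = (Real.cos (ω * τ) : ℂ) * y 0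
        + ((Real.sin (ω * τ) / ω : ℝ) : ℂ) * deriv y 0 := by simp [hF]
    rw [hFτ, hF0] at hint
    linear_combination -hint
  · set F : ℝ → ℂ := fun w => ((-(ω * Real.sin (ω * (τ - w))) : ℝ) : ℂ) * y w
      + (Real.cos (ω * (τ - w)) : ℂ) * deriv y w with hF
    have key : ∀ w ∈ Set.uIcc (0:ℝ) τ, HasDerivAt F
        (-(((Real.cos (ω * (τ - w)) / ε ^ 2 : ℝ) : ℂ) * g w)) w := by
      intro w _
      have h1' : HasDerivAt (fun w : ℝ => -(ω * Real.sin (ω * (τ - w))))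
          (ω^2 * Real.cos (ω * (τ - w))) w := by
        have := ((hsin w).const_mul ω).neg
        refine this.congr_deriv ?_; ring
      have h1 := (h1'.ofReal_comp.mul (dy w))
      have h2 := ((hcos w).ofReal_comp.mul (dy' w))
      have := h1.add h2
      refine this.congr_deriv ?_
      rw [hy'' w]
      push_cast
      field_simp
      ring
    have hcont : Continuous fun w =>
        -(((Real.cos (ω * (τ - w)) / ε ^ 2 : ℝ) : ℂ) * g w) := by fun_prop
    have hint := intervalIntegral.integral_eq_sub_of_hasDerivAt key
      (hcont.intervalIntegrable 0 τ)
    rw [intervalIntegral.integral_neg] at hint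
    have hFτ : F τ = deriv y τ := by simp [hF]
    have hF0 : F 0 = ((-(ω * Real.sin (ω * τ)) : ℝ) : ℂ) * y 0
        + (Real.cos (ω * τ) : ℂ) * deriv y 0 := by simp [hF]
    rw [hFτ, hF0] at hint
    push_cast at hint ⊢
    linear_combination -hint
lemma kernel_bound (g : ℝ → ℂ) (hg : ContDiff ℝ 3 g) (τ : ℝ) (hτ : 0 < τ)
    (k : ℝ → ℝ) (hkc : Continuous k) (M : ℝ) (hM : 0 ≤ M)
    (hk : ∀ w ∈ Set.Icc (0:ℝ) τ, |k w| ≤ M) :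
    ‖∫ w in (0:ℝ)..τ, ((k w : ℝ) : ℂ)
        * ((g 0 + (w : ℂ) * deriv g 0 + ((w : ℂ) ^ 2 / 2) * iteratedDeriv 2 g 0) - g w)‖
      ≤ M * (τ ^ 3 / 2) * ∫ w in (0:ℝ)..τ, ∫ ρ in (0:ℝ)..1, ‖iteratedDeriv 3 g (ρ * w)‖ := by
  have hG3 : Continuous (iteratedDeriv 3 g) := cont_g3 g hg
  set B : ℝ → ℝ := fun w => ∫ ρ in (0:ℝ)..1, ‖iteratedDeriv 3 g (ρ * w)‖ with hBdef
  have hBc : Continuous B := by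
    apply intervalIntegral.continuous_parametric_intervalIntegral_of_continuous'
      (f := fun w ρ => ‖iteratedDeriv 3 g (ρ * w)‖)
    apply Continuous.norm
    exact hG3.comp (by fun_prop)
  have hB0 : ∀ w, 0 ≤ B w := fun w =>
    intervalIntegral.integral_nonneg (by norm_num) (fun s _ => norm_nonneg _)
  have hPB : ∀ w : ℝ, (∫ s in (0:ℝ)..w, ‖iteratedDeriv 3 g s‖) = w * B w := by
    intro w
    have := intervalIntegral.smul_integral_comp_mul_right
      (f := fun s => ‖iteratedDeriv 3 g s‖) (a := (0:ℝ)) (b := 1) w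
    simp only [zero_mul, one_mul, smul_eq_mul] at this
    rw [← this]
  -- pointwise bound
  have hpt : ∀ w ∈ Set.Icc (0:ℝ) τ,
      ‖((k w : ℝ) : ℂ) * ((g 0 + (w : ℂ) * deriv g 0 + ((w : ℂ) ^ 2 / 2) * iteratedDeriv 2 g 0)
        - g w)‖ ≤ M * (τ ^ 3 / 2) * B w := by
    intro w hw
    rw [norm_mul, Complex.norm_real, norm_sub_rev]
    have h1 : ‖g w - (g 0 + (w : ℂ) * deriv g 0 + ((w : ℂ) ^ 2 / 2) * iteratedDeriv 2 g 0)‖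
        ≤ (τ ^ 2 / 2) * (w * B w) := by
      rw [taylor2_int g hg w, ← hPB w]
      calc ‖∫ s in (0:ℝ)..w, (((w - s) ^ 2 / 2 : ℝ) : ℂ) * iteratedDeriv 3 g s‖
          ≤ ∫ s in (0:ℝ)..w, ‖(((w - s) ^ 2 / 2 : ℝ) : ℂ) * iteratedDeriv 3 g s‖ :=
            intervalIntegral.norm_integral_le_integral_norm hw.1
        _ ≤ ∫ s in (0:ℝ)..w, (τ ^ 2 / 2) * ‖iteratedDeriv 3 g s‖ := by
            apply intervalIntegral.integral_mono_on hw.1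
            · exact (Continuous.intervalIntegrable (by fun_prop) 0 w)
            · exact (Continuous.intervalIntegrable (by fun_prop) 0 w)
            · intro s hs
              rw [norm_mul, Complex.norm_real]
              apply mul_le_mul_of_nonneg_right _ (norm_nonneg _)
              rw [Real.norm_eq_abs, abs_of_nonneg (by positivity)]
              have h1 : (w - s) ^ 2 ≤ τ ^ 2 := by
                apply sq_le_sq'
                · nlinarith [hs.1, hs.2, hw.1, hw.2]
                · nlinarith [hs.1, hs.2, hw.1, hw.2]
              linarith
        _ = (τ ^ 2 / 2) * ∫ s in (0:ℝ)..w, ‖iteratedDeriv 3 g s‖ := by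
            rw [intervalIntegral.integral_const_mul]
    calc |k w| * ‖g w - (g 0 + (w : ℂ) * deriv g 0 + ((w : ℂ) ^ 2 / 2) * iteratedDeriv 2 g 0)‖
        ≤ M * ((τ ^ 2 / 2) * (w * B w)) :=
          mul_le_mul (hk w hw) h1 (norm_nonneg _) hM
      _ ≤ M * (τ ^ 2 / 2 * (τ * B w)) := by
          have h2 : w * B w ≤ τ * B w := mul_le_mul_of_nonneg_right hw.2 (hB0 w)
          have h3 : τ ^ 2 / 2 * (w * B w) ≤ τ ^ 2 / 2 * (τ * B w) :=
            mul_le_mul_of_nonneg_left h2 (by positivity)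
          exact mul_le_mul_of_nonneg_left h3 hM
      _ = M * (τ ^ 3 / 2) * B w := by ring
  calc ‖∫ w in (0:ℝ)..τ, ((k w : ℝ) : ℂ)
        * ((g 0 + (w : ℂ) * deriv g 0 + ((w : ℂ) ^ 2 / 2) * iteratedDeriv 2 g 0) - g w)‖
      ≤ ∫ w in (0:ℝ)..τ, ‖((k w : ℝ) : ℂ)
        * ((g 0 + (w : ℂ) * deriv g 0 + ((w : ℂ) ^ 2 / 2) * iteratedDeriv 2 g 0) - g w)‖ :=
        intervalIntegral.norm_integral_le_integral_norm hτ.le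
    _ ≤ ∫ w in (0:ℝ)..τ, M * (τ ^ 3 / 2) * B w := by
        apply intervalIntegral.integral_mono_on hτ.le
        · apply Continuous.intervalIntegrable
          apply Continuous.norm
          apply (Complex.continuous_ofReal.comp hkc).mul
          apply Continuous.sub _ (hg.continuous)
          fun_prop
        · exact ((continuous_const.mul hBc).intervalIntegrable 0 τ)
        · exact hpt
    _ = M * (τ ^ 3 / 2) * ∫ w in (0:ℝ)..τ, B w := by
        rw [intervalIntegral.integral_const_mul]


/-- Third-order bounds on the first-step truncation errors
`ξ¹` and `ξ̇¹` of the Gautschi-type quadrature at the starting step, for the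
oscillatory ODE `ε²y'' + (μ² + ε⁻²)y + g = 0` with `ω = √(ε²μ²+1)/ε²`
(so that `1/(ε²ω) = 1/√(1+ε²μ²)`). -/
theorem first_step_truncation_error_bounds
    (ε μ : ℝ) (hε : 0 < ε)
    (ω : ℝ) (hω : ω = Real.sqrt (ε ^ 2 * μ ^ 2 + 1) / ε ^ 2)
    (g : ℝ → ℂ) (hg : ContDiff ℝ 3 g)
    (y : ℝ → ℂ) (hy : ContDiff ℝ 2 y)
    (hode : ∀ t : ℝ,
      (ε : ℂ) ^ 2 * deriv (deriv y) t + ((μ : ℂ) ^ 2 + ((ε : ℂ) ^ 2)⁻¹) * y t + g t = 0)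
    (τ : ℝ) (hτ : 0 < τ)
    (ξ1 ξdot1 : ℂ)
    (hξ1 : ξ1 = y τ - (Real.cos (ω * τ) : ℂ) * y 0
      - ((Real.sin (ω * τ) / ω : ℝ) : ℂ) * deriv y 0
      + ∫ w in (0:ℝ)..τ, ((Real.sin (ω * (τ - w)) / (ε ^ 2 * ω) : ℝ) : ℂ)
          * (g 0 + (w : ℂ) * deriv g 0 + ((w : ℂ) ^ 2 / 2) * iteratedDeriv 2 g 0))
    (hξdot1 : ξdot1 = deriv y τ + ((ω * Real.sin (ω * τ) : ℝ) : ℂ) * y 0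
      - (Real.cos (ω * τ) : ℂ) * deriv y 0
      + ∫ w in (0:ℝ)..τ, ((Real.cos (ω * (τ - w)) / ε ^ 2 : ℝ) : ℂ)
          * (g 0 + (w : ℂ) * deriv g 0 + ((w : ℂ) ^ 2 / 2) * iteratedDeriv 2 g 0)) :
    ‖ξ1‖ ≤ (τ ^ 3 / (2 * Real.sqrt (1 + ε ^ 2 * μ ^ 2)))
        * ∫ w in (0:ℝ)..τ, ∫ ρ in (0:ℝ)..1, ‖iteratedDeriv 3 g (ρ * w)‖
    ∧ ‖ξdot1‖ ≤ (τ ^ 3 / (2 * ε ^ 2))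
        * ∫ w in (0:ℝ)..τ, ∫ ρ in (0:ℝ)..1, ‖iteratedDeriv 3 g (ρ * w)‖ := by
  have hε2 : (0:ℝ) < ε ^ 2 := by positivity
  have hεc : (ε:ℂ) ≠ 0 := Complex.ofReal_ne_zero.mpr hε.ne'
  have hs : (0:ℝ) < Real.sqrt (ε ^ 2 * μ ^ 2 + 1) := Real.sqrt_pos.mpr (by positivity)
  have hω0 : 0 < ω := hω ▸ div_pos hs hε2
  have he2ω : ε ^ 2 * ω = Real.sqrt (ε ^ 2 * μ ^ 2 + 1) := by
    rw [hω]; field_simp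
  have hsq' : Real.sqrt (1 + ε ^ 2 * μ ^ 2) = Real.sqrt (ε ^ 2 * μ ^ 2 + 1) := by
    rw [add_comm]
  have hω2 : ε ^ 2 * ω ^ 2 = μ ^ 2 + (ε ^ 2)⁻¹ := by
    rw [hω, div_pow, Real.sq_sqrt (by positivity)]
    field_simp
  have hcast : ((μ:ℂ)) ^ 2 + (((ε:ℂ)) ^ 2)⁻¹ = ((ε:ℂ)) ^ 2 * ((ω:ℂ)) ^ 2 := by
    have := congrArg (fun x : ℝ => (x:ℂ)) hω2
    push_cast at this
    exact this.symm
  have hy'' : ∀ t, deriv (deriv y) t = -((ω:ℂ)) ^ 2 * y t - g t / (ε:ℂ) ^ 2 := by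
    intro t
    apply mul_left_cancel₀ (pow_ne_zero 2 hεc)
    have key : (ε:ℂ) ^ 2 * deriv (deriv y) t = -((μ:ℂ) ^ 2 + ((ε:ℂ) ^ 2)⁻¹) * y t - g t := by
      linear_combination hode t
    rw [key, hcast]
    field_simp
  have hgc : Continuous g := hg.continuous
  obtain ⟨hd1, hd2⟩ := duhamel ε ω hε hω0 g hgc y hy hy'' τ
  constructor
  · have hξ : ξ1 = ∫ w in (0:ℝ)..τ,
        ((Real.sin (ω * (τ - w)) / (ε ^ 2 * ω) : ℝ) : ℂ)
          * ((g 0 + (w : ℂ) * deriv g 0 + ((w : ℂ) ^ 2 / 2) * iteratedDeriv 2 g 0) - g w) := by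
      rw [hξ1, hd1, neg_add_eq_sub, ← intervalIntegral.integral_sub]
      · simp_rw [← mul_sub]
      · exact Continuous.intervalIntegrable (by fun_prop) 0 τ
      · exact Continuous.intervalIntegrable (by fun_prop) 0 τ
    rw [hξ]
    have := kernel_bound g hg τ hτ (fun w => Real.sin (ω * (τ - w)) / (ε ^ 2 * ω))
      (by fun_prop) ((Real.sqrt (1 + ε ^ 2 * μ ^ 2))⁻¹) (by positivity) ?_
    · calc _ ≤ (Real.sqrt (1 + ε ^ 2 * μ ^ 2))⁻¹ * (τ ^ 3 / 2)
          * ∫ w in (0:ℝ)..τ, ∫ ρ in (0:ℝ)..1, ‖iteratedDeriv 3 g (ρ * w)‖ := this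
        _ = (τ ^ 3 / (2 * Real.sqrt (1 + ε ^ 2 * μ ^ 2)))
          * ∫ w in (0:ℝ)..τ, ∫ ρ in (0:ℝ)..1, ‖iteratedDeriv 3 g (ρ * w)‖ := by
            rw [hsq']; ring
    · intro w _
      rw [abs_div, abs_of_pos (by positivity : (0:ℝ) < ε ^ 2 * ω), he2ω, hsq',
        inv_eq_one_div]
      gcongr
      exact Real.abs_sin_le_one _
  · have hξ : ξdot1 = ∫ w in (0:ℝ)..τ,
        ((Real.cos (ω * (τ - w)) / ε ^ 2 : ℝ) : ℂ)
          * ((g 0 + (w : ℂ) * deriv g 0 + ((w : ℂ) ^ 2 / 2) * iteratedDeriv 2 g 0) - g w) := by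
      rw [hξdot1, hd2, neg_add_eq_sub, ← intervalIntegral.integral_sub]
      · simp_rw [← mul_sub]
      · exact Continuous.intervalIntegrable (by fun_prop) 0 τ
      · exact Continuous.intervalIntegrable (by fun_prop) 0 τ
    rw [hξ]
    have := kernel_bound g hg τ hτ (fun w => Real.cos (ω * (τ - w)) / ε ^ 2)
      (by fun_prop) ((ε ^ 2)⁻¹) (by positivity) ?_
    · calc _ ≤ (ε ^ 2)⁻¹ * (τ ^ 3 / 2)
          * ∫ w in (0:ℝ)..τ, ∫ ρ in (0:ℝ)..1, ‖iteratedDeriv 3 g (ρ * w)‖ := this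
        _ = (τ ^ 3 / (2 * ε ^ 2))
          * ∫ w in (0:ℝ)..τ, ∫ ρ in (0:ℝ)..1, ‖iteratedDeriv 3 g (ρ * w)‖ := by
            ring
    · intro w _
      rw [abs_div, abs_of_pos hε2, inv_eq_one_div]
      gcongr
      exact Real.abs_cos_le_one _
end
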